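/- arXiv:0803.1024 — 14 statements merged into one kernel-verified Lean document; each statement's English description precedes it below -/
import Mathlib

section
/- Along any solution of the Kowalevski equations in two constant fields, at every time t where M₁(t)² + M₂(t)² ≠ 0, the function S = −(M_α M₁ + M_β M₂)/(M₁² + M₂²) is differentiable and satisfies dS/dt = −[((M₁² + M₂²)ω₃ + 4α₃M₁ + 4β₃M₂)/(2(M₁² + M₂²)²)]·(M_α M₂ − M_β M₁). -/
/-!
`Mα` and `Mβ` are the components of the angular momentum `(2ω₁, 2ω₂, ω₃)` along the Poisson
vectors `α` and `β`. With the moments of inertia in the ratio `2 : 2 : 1` the gyroscopic terms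
cancel in their derivatives, leaving `Mα' = α₁β₃ - α₃β₁` and `Mβ' = α₂β₃ - α₃β₂`. Hence, with
`K = Mα M₂ - Mβ M₁`, the numerator `N = Mα M₁ + Mβ M₂` and the denominator `D = M₁² + M₂²`
of `-S` satisfy `N' = 2(β₃ Mα - α₃ Mβ) + ω₃ K / 2` and `D' = 2(β₃ M₁ - α₃ M₂)`, so that
`N' D - N D' = K (D ω₃ + 4 α₃ M₁ + 4 β₃ M₂) / 2`.
-/

section

variable {ω₁ ω₂ ω₃ α₃ β₃ γ₁ γ₂ γ₃ : ℝ → ℝ} {t ω₃' : ℝ}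

theorem hasDerivAt_angularMomentum_dot
    (hω₁ : HasDerivAt ω₁ ((ω₂ t * ω₃ t + β₃ t) / 2) t)
    (hω₂ : HasDerivAt ω₂ ((-(ω₁ t * ω₃ t) - α₃ t) / 2) t)
    (hω₃ : HasDerivAt ω₃ ω₃' t)
    (hγ₁ : HasDerivAt γ₁ (γ₂ t * ω₃ t - γ₃ t * ω₂ t) t)
    (hγ₂ : HasDerivAt γ₂ (γ₃ t * ω₁ t - γ₁ t * ω₃ t) t)
    (hγ₃ : HasDerivAt γ₃ (γ₁ t * ω₂ t - γ₂ t * ω₁ t) t) :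
    HasDerivAt (fun t => 2 * ω₁ t * γ₁ t + 2 * ω₂ t * γ₂ t + ω₃ t * γ₃ t)
      (β₃ t * γ₁ t - α₃ t * γ₂ t + ω₃' * γ₃ t) t := by
  refine ((((hω₁.const_mul 2).mul hγ₁).add ((hω₂.const_mul 2).mul hγ₂)).add
    (hω₃.mul hγ₃)).congr_deriv ?_
  ring

end

/-- Along any solution of the Kowalevski equations in two constant fields, at every time `t`
where `M₁ t ^ 2 + M₂ t ^ 2 ≠ 0`, the function
`S = -(Mα M₁ + Mβ M₂)/(M₁² + M₂²)` is differentiable and its derivative equals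
`-[((M₁² + M₂²) ω₃ + 4 α₃ M₁ + 4 β₃ M₂)/(2 (M₁² + M₂²)²)] ⬝ (Mα M₂ - Mβ M₁)`. -/
theorem stmt_0
    (ω₁ ω₂ ω₃ α₁ α₂ α₃ β₁ β₂ β₃ : ℝ → ℝ)
    (hω₁ : ∀ t, HasDerivAt ω₁ ((ω₂ t * ω₃ t + β₃ t) / 2) t)
    (hω₂ : ∀ t, HasDerivAt ω₂ ((-(ω₁ t * ω₃ t) - α₃ t) / 2) t)
    (hω₃ : ∀ t, HasDerivAt ω₃ (α₂ t - β₁ t) t)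
    (hα₁ : ∀ t, HasDerivAt α₁ (α₂ t * ω₃ t - α₃ t * ω₂ t) t)
    (hα₂ : ∀ t, HasDerivAt α₂ (α₃ t * ω₁ t - α₁ t * ω₃ t) t)
    (hα₃ : ∀ t, HasDerivAt α₃ (α₁ t * ω₂ t - α₂ t * ω₁ t) t)
    (hβ₁ : ∀ t, HasDerivAt β₁ (β₂ t * ω₃ t - β₃ t * ω₂ t) t)
    (hβ₂ : ∀ t, HasDerivAt β₂ (β₃ t * ω₁ t - β₁ t * ω₃ t) t)
    (hβ₃ : ∀ t, HasDerivAt β₃ (β₁ t * ω₂ t - β₂ t * ω₁ t) t)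
    (M₁ M₂ Mα Mβ S : ℝ → ℝ)
    (hM₁ : M₁ = fun t => 2 * ω₁ t)
    (hM₂ : M₂ = fun t => 2 * ω₂ t)
    (hMα : Mα = fun t => 2 * ω₁ t * α₁ t + 2 * ω₂ t * α₂ t + ω₃ t * α₃ t)
    (hMβ : Mβ = fun t => 2 * ω₁ t * β₁ t + 2 * ω₂ t * β₂ t + ω₃ t * β₃ t)
    (hS : S = fun t => -(Mα t * M₁ t + Mβ t * M₂ t) / (M₁ t ^ 2 + M₂ t ^ 2))
    (t : ℝ) (ht : M₁ t ^ 2 + M₂ t ^ 2 ≠ 0) :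
    HasDerivAt S
      (-(((M₁ t ^ 2 + M₂ t ^ 2) * ω₃ t + 4 * α₃ t * M₁ t + 4 * β₃ t * M₂ t) /
            (2 * (M₁ t ^ 2 + M₂ t ^ 2) ^ 2)) *
        (Mα t * M₂ t - Mβ t * M₁ t)) t := by
  have hM₁' : HasDerivAt M₁ (ω₃ t * M₂ t / 2 + β₃ t) t := by
    subst hM₁ hM₂
    exact ((hω₁ t).const_mul 2).congr_deriv (by ring)
  have hM₂' : HasDerivAt M₂ (-(ω₃ t * M₁ t / 2) - α₃ t) t := by
    subst hM₁ hM₂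
    exact ((hω₂ t).const_mul 2).congr_deriv (by ring)
  have hMα' : HasDerivAt Mα (α₁ t * β₃ t - α₃ t * β₁ t) t := by
    subst hMα
    refine (hasDerivAt_angularMomentum_dot (hω₁ t) (hω₂ t) (hω₃ t)
      (hα₁ t) (hα₂ t) (hα₃ t)).congr_deriv ?_
    ring
  have hMβ' : HasDerivAt Mβ (α₂ t * β₃ t - α₃ t * β₂ t) t := by
    subst hMβ
    refine (hasDerivAt_angularMomentum_dot (hω₁ t) (hω₂ t) (hω₃ t)
      (hβ₁ t) (hβ₂ t) (hβ₃ t)).congr_deriv ?_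
    ring
  have hN : HasDerivAt (fun t => Mα t * M₁ t + Mβ t * M₂ t)
      (2 * (β₃ t * Mα t - α₃ t * Mβ t) + ω₃ t / 2 * (Mα t * M₂ t - Mβ t * M₁ t)) t := by
    refine ((hMα'.mul hM₁').add (hMβ'.mul hM₂')).congr_deriv ?_
    subst hM₁ hM₂ hMα hMβ
    ring
  have hD : HasDerivAt (fun t => M₁ t ^ 2 + M₂ t ^ 2) (2 * (β₃ t * M₁ t - α₃ t * M₂ t)) t := by
    refine ((hM₁'.pow 2).add (hM₂'.pow 2)).congr_deriv ?_
    ring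
  subst hS
  refine (hN.neg.div hD ht).congr_deriv ?_
  simp only [Pi.neg_apply]
  field_simp
  ring
end

section
/- (Theorem 1.) Let a solution of the Kowalevski equations in two constant fields on an interval satisfy M₁² + M₂² ≠ 0 and M_α M₂ − M_β M₁ = 0 identically on that interval. Then the function S = −(M_α M₁ + M_β M₂)/(M₁² + M₂²) is constant on the interval, and, denoting its constant value by s, one has M_α = −s·M₁ and M_β = −s·M₂ identically; in particular the ratios M_α/M₁ and M_β/M₂ are constant and equal to each other wherever M₁ ≠ 0 and M₂ ≠ 0. -/
/-!
Write `u = (M₁, M₂)`, `v = (Mα, Mβ)` and `f = (β₃, -α₃)`. Along a solution,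
`u' = (ω₃/2) J u + f` with `J` the rotation by `-π/2`, and `⟨v', u⟩ = ⟨v, f⟩`.
The hypothesis `Mα M₂ - Mβ M₁ = 0` says that `v` is parallel to `u`, namely `v = -S u`; then
`⟨v, u⟩' = 2 ⟨v, f⟩ = -S |u|²'`, so `S = -⟨v, u⟩ / |u|²` is stationary, hence constant.
-/

theorem Convex.exists_eq_const_of_hasDerivAt_zero {s : Set ℝ} (hs : Convex ℝ s) {f : ℝ → ℝ}
    (hf : ∀ t ∈ s, HasDerivAt f 0 t) : ∃ c, ∀ t ∈ s, f t = c := by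
  rcases s.eq_empty_or_nonempty with rfl | ⟨t₀, ht₀⟩
  · exact ⟨0, by simp⟩
  refine ⟨f t₀, fun t ht => ?_⟩
  have := hs.norm_image_sub_le_of_norm_hasDerivWithin_le (C := 0)
    (fun x hx => (hf x hx).hasDerivWithinAt) (fun _ _ => by simp) ht₀ ht
  simpa [sub_eq_zero] using this

theorem eq_neg_mul_of_cross_eq_zero {K : Type*} [Field K] {u₁ u₂ v₁ v₂ s : K}
    (hD : u₁ ^ 2 + u₂ ^ 2 ≠ 0) (hR : v₁ * u₂ - v₂ * u₁ = 0)
    (hs : -(v₁ * u₁ + v₂ * u₂) / (u₁ ^ 2 + u₂ ^ 2) = s) : v₁ = -s * u₁ ∧ v₂ = -s * u₂ := by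
  subst hs
  constructor <;> field_simp
  · linear_combination u₂ * hR
  · linear_combination -u₁ * hR

theorem hasDerivAt_neg_inner_div_normSq_eq_zero {u₁ u₂ v₁ v₂ : ℝ → ℝ} {t w f₁ f₂ v₁' v₂' : ℝ}
    (hu₁ : HasDerivAt u₁ (w * u₂ t + f₁) t) (hu₂ : HasDerivAt u₂ (-(w * u₁ t) + f₂) t)
    (hv₁ : HasDerivAt v₁ v₁' t) (hv₂ : HasDerivAt v₂ v₂' t)
    (hv' : v₁' * u₁ t + v₂' * u₂ t = v₁ t * f₁ + v₂ t * f₂)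
    (hD : u₁ t ^ 2 + u₂ t ^ 2 ≠ 0) (hR : v₁ t * u₂ t - v₂ t * u₁ t = 0) :
    HasDerivAt (fun t => -(v₁ t * u₁ t + v₂ t * u₂ t) / (u₁ t ^ 2 + u₂ t ^ 2)) 0 t := by
  refine (((hv₁.mul hu₁).add (hv₂.mul hu₂)).neg.div
    ((hu₁.pow 2).add (hu₂.pow 2)) hD).congr_deriv ?_
  rw [div_eq_zero_iff]
  left
  simp only [Pi.add_apply, Pi.neg_apply, Pi.mul_apply, Pi.pow_apply, Nat.cast_ofNat]
  -- Binet–Cauchy: `⟨v, u⟩⟨u, f⟩ - ⟨v, f⟩⟨u, u⟩ = (v × u)(u × f)`.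
  linear_combination (-(u₁ t ^ 2 + u₂ t ^ 2)) * hv'
    + (2 * (u₁ t * f₂ - u₂ t * f₁) - w * (u₁ t ^ 2 + u₂ t ^ 2)) * hR

theorem hasDerivAt_kowalevski_pairing {ω₁ ω₂ ω₃ γ₁ γ₂ γ₃ : ℝ → ℝ} {t p q r : ℝ}
    (hω₁ : HasDerivAt ω₁ ((ω₂ t * ω₃ t + p) / 2) t)
    (hω₂ : HasDerivAt ω₂ ((-(ω₁ t * ω₃ t) - q) / 2) t)
    (hω₃ : HasDerivAt ω₃ r t)
    (hγ₁ : HasDerivAt γ₁ (γ₂ t * ω₃ t - γ₃ t * ω₂ t) t)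
    (hγ₂ : HasDerivAt γ₂ (γ₃ t * ω₁ t - γ₁ t * ω₃ t) t)
    (hγ₃ : HasDerivAt γ₃ (γ₁ t * ω₂ t - γ₂ t * ω₁ t) t) :
    HasDerivAt (fun t => 2 * ω₁ t * γ₁ t + 2 * ω₂ t * γ₂ t + ω₃ t * γ₃ t)
      (p * γ₁ t - q * γ₂ t + r * γ₃ t) t :=
  ((((hω₁.const_mul 2).mul hγ₁).add ((hω₂.const_mul 2).mul hγ₂)).add
    (hω₃.mul hγ₃)).congr_deriv (by ring)

/-- Theorem 1: if along a solution of the Kowalevski equations in two constant fields on an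
interval `I` one has `M₁² + M₂² ≠ 0` and `Mα M₂ - Mβ M₁ = 0` identically, then
`S = -(Mα M₁ + Mβ M₂)/(M₁² + M₂²)` is constant on `I`, with constant value `s` one has
`Mα = -s M₁` and `Mβ = -s M₂` identically, and in particular the ratios `Mα/M₁`, `Mβ/M₂`
are constant and equal to each other wherever `M₁ ≠ 0` and `M₂ ≠ 0`. -/
theorem stmt_1
    (I : Set ℝ) (hI : I.OrdConnected)
    (ω₁ ω₂ ω₃ α₁ α₂ α₃ β₁ β₂ β₃ : ℝ → ℝ)
    (hω₁ : ∀ t ∈ I, HasDerivAt ω₁ ((ω₂ t * ω₃ t + β₃ t) / 2) t)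
    (hω₂ : ∀ t ∈ I, HasDerivAt ω₂ ((-(ω₁ t * ω₃ t) - α₃ t) / 2) t)
    (hω₃ : ∀ t ∈ I, HasDerivAt ω₃ (α₂ t - β₁ t) t)
    (hα₁ : ∀ t ∈ I, HasDerivAt α₁ (α₂ t * ω₃ t - α₃ t * ω₂ t) t)
    (hα₂ : ∀ t ∈ I, HasDerivAt α₂ (α₃ t * ω₁ t - α₁ t * ω₃ t) t)
    (hα₃ : ∀ t ∈ I, HasDerivAt α₃ (α₁ t * ω₂ t - α₂ t * ω₁ t) t)
    (hβ₁ : ∀ t ∈ I, HasDerivAt β₁ (β₂ t * ω₃ t - β₃ t * ω₂ t) t)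
    (hβ₂ : ∀ t ∈ I, HasDerivAt β₂ (β₃ t * ω₁ t - β₁ t * ω₃ t) t)
    (hβ₃ : ∀ t ∈ I, HasDerivAt β₃ (β₁ t * ω₂ t - β₂ t * ω₁ t) t)
    (M₁ M₂ Mα Mβ S : ℝ → ℝ)
    (hM₁ : M₁ = fun t => 2 * ω₁ t)
    (hM₂ : M₂ = fun t => 2 * ω₂ t)
    (hMα : Mα = fun t => 2 * ω₁ t * α₁ t + 2 * ω₂ t * α₂ t + ω₃ t * α₃ t)
    (hMβ : Mβ = fun t => 2 * ω₁ t * β₁ t + 2 * ω₂ t * β₂ t + ω₃ t * β₃ t)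
    (hS : S = fun t => -(Mα t * M₁ t + Mβ t * M₂ t) / (M₁ t ^ 2 + M₂ t ^ 2))
    (hne : ∀ t ∈ I, M₁ t ^ 2 + M₂ t ^ 2 ≠ 0)
    (hrel : ∀ t ∈ I, Mα t * M₂ t - Mβ t * M₁ t = 0) :
    ∃ s : ℝ,
      (∀ t ∈ I, S t = s) ∧
      (∀ t ∈ I, Mα t = -s * M₁ t ∧ Mβ t = -s * M₂ t) ∧
      (∀ t ∈ I, M₁ t ≠ 0 → M₂ t ≠ 0 → Mα t / M₁ t = -s ∧ Mβ t / M₂ t = -s) := by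
  have hS' : ∀ t ∈ I, HasDerivAt S 0 t := by
    subst hM₁ hM₂ hMα hMβ hS
    intro t ht
    exact hasDerivAt_neg_inner_div_normSq_eq_zero (w := ω₃ t / 2) (f₁ := β₃ t) (f₂ := -α₃ t)
      (((hω₁ t ht).const_mul 2).congr_deriv (by ring))
      (((hω₂ t ht).const_mul 2).congr_deriv (by ring))
      (hasDerivAt_kowalevski_pairing (hω₁ t ht) (hω₂ t ht) (hω₃ t ht)
        (hα₁ t ht) (hα₂ t ht) (hα₃ t ht))
      (hasDerivAt_kowalevski_pairing (hω₁ t ht) (hω₂ t ht) (hω₃ t ht)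
        (hβ₁ t ht) (hβ₂ t ht) (hβ₃ t ht))
      (by ring) (hne t ht) (hrel t ht)
  obtain ⟨s, hs⟩ := hI.convex.exists_eq_const_of_hasDerivAt_zero hS'
  have hpar : ∀ t ∈ I, Mα t = -s * M₁ t ∧ Mβ t = -s * M₂ t := fun t ht =>
    eq_neg_mul_of_cross_eq_zero (hne t ht) (hrel t ht) (by rw [← hs t ht, hS])
  refine ⟨s, hs, hpar, fun t ht h₁ h₂ => ?_⟩
  rw [div_eq_iff h₁, div_eq_iff h₂]
  exact hpar t ht
end

section
/- (Theorem 2.) Along any solution of the Kowalevski equations in two constant fields, the function T = (1/2)(M_α M₁ + M_β M₂) − 2(α₁β₂ − α₂β₁) + a² + b² (for any real constants a, b) satisfies dT/dt = (1/4)·ω₃·(M_α M₂ − M_β M₁). Consequently, if M_α M₂ − M_β M₁ = 0 identically on an interval, then T is constant on that interval. -/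
/-!
Differentiating along the flow, the pairings `Mγ = 2ω₁γ₁ + 2ω₂γ₂ + ω₃γ₃` of the angular momentum
with a field `γ` obeying the Poisson equation `γ' = γ × ω` only feel the torque: the gyroscopic
terms cancel, so `Mα' = α₁β₃ - α₃β₁` and `Mβ' = α₂β₃ - α₃β₂`. The third component of `α × β`
rotates with the body, so `(α₁β₂ - α₂β₁)' = ω₁ Mα' + ω₂ Mβ'`. In `T'` these two contributions
cancel exactly, leaving the part coming from the `ω₁ω₃`, `ω₂ω₃` terms of `M₁'` and `M₂'`.
-/

theorem Convex.eq_of_forall_hasDerivWithinAt_zero {E : Type*} [NormedAddCommGroup E]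
    [NormedSpace ℝ E] {f : ℝ → E} {s : Set ℝ} (hs : Convex ℝ s)
    (hf : ∀ x ∈ s, HasDerivWithinAt f 0 s x) {x y : ℝ} (hx : x ∈ s) (hy : y ∈ s) :
    f x = f y := by
  have h := hs.norm_image_sub_le_of_norm_hasDerivWithin_le hf (C := 0) (by simp) hx hy
  rw [zero_mul, norm_le_zero_iff, sub_eq_zero] at h
  exact h.symm

section KowalevskiTop

variable {ω₁ ω₂ ω₃ : ℝ → ℝ} {t : ℝ}

/-- `p`, `q`, `r` are the torque components; for the Kowalevski top in two constant fields they
are `β₃`, `α₃` and `α₂ - β₁`. -/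
theorem hasDerivAt_angularMomentum_pairing {γ₁ γ₂ γ₃ : ℝ → ℝ} {p q r : ℝ}
    (hω₁ : HasDerivAt ω₁ ((ω₂ t * ω₃ t + p) / 2) t)
    (hω₂ : HasDerivAt ω₂ ((-(ω₁ t * ω₃ t) - q) / 2) t)
    (hω₃ : HasDerivAt ω₃ r t)
    (hγ₁ : HasDerivAt γ₁ (γ₂ t * ω₃ t - γ₃ t * ω₂ t) t)
    (hγ₂ : HasDerivAt γ₂ (γ₃ t * ω₁ t - γ₁ t * ω₃ t) t)
    (hγ₃ : HasDerivAt γ₃ (γ₁ t * ω₂ t - γ₂ t * ω₁ t) t) :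
    HasDerivAt (fun s => 2 * ω₁ s * γ₁ s + 2 * ω₂ s * γ₂ s + ω₃ s * γ₃ s)
      (p * γ₁ t - q * γ₂ t + r * γ₃ t) t := by
  refine ((((hω₁.const_mul 2).mul hγ₁).add ((hω₂.const_mul 2).mul hγ₂)).add
    (hω₃.mul hγ₃)).congr_deriv ?_
  ring

theorem hasDerivAt_cross_third {α₁ α₂ α₃ β₁ β₂ β₃ : ℝ → ℝ}
    (hα₁ : HasDerivAt α₁ (α₂ t * ω₃ t - α₃ t * ω₂ t) t)
    (hα₂ : HasDerivAt α₂ (α₃ t * ω₁ t - α₁ t * ω₃ t) t)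
    (hβ₁ : HasDerivAt β₁ (β₂ t * ω₃ t - β₃ t * ω₂ t) t)
    (hβ₂ : HasDerivAt β₂ (β₃ t * ω₁ t - β₁ t * ω₃ t) t) :
    HasDerivAt (fun s => α₁ s * β₂ s - α₂ s * β₁ s)
      (ω₁ t * (α₁ t * β₃ t - α₃ t * β₁ t) + ω₂ t * (α₂ t * β₃ t - α₃ t * β₂ t)) t := by
  refine ((hα₁.mul hβ₂).sub (hα₂.mul hβ₁)).congr_deriv ?_
  ring

end KowalevskiTop

/-- Theorem 2: along any solution of the Kowalevski equations in two constant fields, the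
function `T = (1/2)(Mα M₁ + Mβ M₂) - 2(α₁ β₂ - α₂ β₁) + a² + b²` satisfies
`dT/dt = (1/4) ω₃ (Mα M₂ - Mβ M₁)`; consequently, if `Mα M₂ - Mβ M₁ = 0` identically on an
interval `I`, then `T` is constant on `I`. -/
theorem stmt_2
    (a b : ℝ)
    (ω₁ ω₂ ω₃ α₁ α₂ α₃ β₁ β₂ β₃ : ℝ → ℝ)
    (hω₁ : ∀ t, HasDerivAt ω₁ ((ω₂ t * ω₃ t + β₃ t) / 2) t)
    (hω₂ : ∀ t, HasDerivAt ω₂ ((-(ω₁ t * ω₃ t) - α₃ t) / 2) t)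
    (hω₃ : ∀ t, HasDerivAt ω₃ (α₂ t - β₁ t) t)
    (hα₁ : ∀ t, HasDerivAt α₁ (α₂ t * ω₃ t - α₃ t * ω₂ t) t)
    (hα₂ : ∀ t, HasDerivAt α₂ (α₃ t * ω₁ t - α₁ t * ω₃ t) t)
    (hα₃ : ∀ t, HasDerivAt α₃ (α₁ t * ω₂ t - α₂ t * ω₁ t) t)
    (hβ₁ : ∀ t, HasDerivAt β₁ (β₂ t * ω₃ t - β₃ t * ω₂ t) t)
    (hβ₂ : ∀ t, HasDerivAt β₂ (β₃ t * ω₁ t - β₁ t * ω₃ t) t)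
    (hβ₃ : ∀ t, HasDerivAt β₃ (β₁ t * ω₂ t - β₂ t * ω₁ t) t)
    (M₁ M₂ Mα Mβ T : ℝ → ℝ)
    (hM₁ : M₁ = fun t => 2 * ω₁ t)
    (hM₂ : M₂ = fun t => 2 * ω₂ t)
    (hMα : Mα = fun t => 2 * ω₁ t * α₁ t + 2 * ω₂ t * α₂ t + ω₃ t * α₃ t)
    (hMβ : Mβ = fun t => 2 * ω₁ t * β₁ t + 2 * ω₂ t * β₂ t + ω₃ t * β₃ t)
    (hT : T = fun t =>
      (1 / 2) * (Mα t * M₁ t + Mβ t * M₂ t) - 2 * (α₁ t * β₂ t - α₂ t * β₁ t)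
        + a ^ 2 + b ^ 2) :
    (∀ t, HasDerivAt T ((1 / 4) * ω₃ t * (Mα t * M₂ t - Mβ t * M₁ t)) t) ∧
    (∀ I : Set ℝ, I.OrdConnected → (∀ t ∈ I, Mα t * M₂ t - Mβ t * M₁ t = 0) →
      ∀ t₁ ∈ I, ∀ t₂ ∈ I, T t₁ = T t₂) := by
  have hT' : ∀ t, HasDerivAt T ((1 / 4) * ω₃ t * (Mα t * M₂ t - Mβ t * M₁ t)) t := by
    intro t
    have hMα' : HasDerivAt Mα _ t := hMα ▸ hasDerivAt_angularMomentum_pairing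
      (hω₁ t) (hω₂ t) (hω₃ t) (hα₁ t) (hα₂ t) (hα₃ t)
    have hMβ' : HasDerivAt Mβ _ t := hMβ ▸ hasDerivAt_angularMomentum_pairing
      (hω₁ t) (hω₂ t) (hω₃ t) (hβ₁ t) (hβ₂ t) (hβ₃ t)
    have hM₁' : HasDerivAt M₁ _ t := hM₁ ▸ (hω₁ t).const_mul 2
    have hM₂' : HasDerivAt M₂ _ t := hM₂ ▸ (hω₂ t).const_mul 2
    have hcross := hasDerivAt_cross_third (hα₁ t) (hα₂ t) (hβ₁ t) (hβ₂ t)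
    subst hT
    refine (((((hMα'.mul hM₁').add (hMβ'.mul hM₂')).const_mul (1 / 2)).sub
      (hcross.const_mul 2)).add_const (a ^ 2)).add_const (b ^ 2) |>.congr_deriv ?_
    subst hM₁ hM₂ hMα hMβ
    ring
  refine ⟨hT', fun I hI hzero t₁ ht₁ t₂ ht₂ => hI.convex.eq_of_forall_hasDerivWithinAt_zero
    (fun t ht => ?_) ht₁ ht₂⟩
  simpa only [hzero t ht, mul_zero] using (hT' t).hasDerivWithinAt
end

section
/- Along any solution of the Kowalevski equations in two constant fields, the complex-valued functions x₁,x₂,y₁,y₂,z₁,z₂,w₁,w₂,w₃ satisfy dx₁/dt = i(−x₁w₃ + z₁w₁), dx₂/dt = i(x₂w₃ − z₂w₂), dy₁/dt = i(−y₁w₃ + z₂w₁), dy₂/dt = i(y₂w₃ − z₁w₂), 2·dz₁/dt = i(x₁w₂ − y₂w₁), 2·dz₂/dt = i(−x₂w₁ + y₁w₂), 2·dw₁/dt = −i(w₁w₃ + z₁), 2·dw₂/dt = i(w₂w₃ + z₂), 2·dw₃/dt = i(y₂ − y₁). -/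
/-!
The nine complex coordinates are real-linear combinations `a + b i` or `a - b i` of the real
unknowns, so their derivatives are the same combinations of the right-hand sides of the real
system; each claimed equation is then a polynomial identity, checked on real and imaginary parts.
-/

open Complex

theorem HasDerivAt.ofReal_add_ofReal_mul_I {f g : ℝ → ℝ} {f' g' x : ℝ}
    (hf : HasDerivAt f f' x) (hg : HasDerivAt g g' x) :
    HasDerivAt (fun t => (f t : ℂ) + (g t : ℂ) * I) (f' + g' * I) x :=
  hf.ofReal_comp.add (hg.ofReal_comp.mul_const I)

theorem HasDerivAt.ofReal_sub_ofReal_mul_I {f g : ℝ → ℝ} {f' g' x : ℝ}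
    (hf : HasDerivAt f f' x) (hg : HasDerivAt g g' x) :
    HasDerivAt (fun t => (f t : ℂ) - (g t : ℂ) * I) (f' - g' * I) x :=
  hf.ofReal_comp.sub (hg.ofReal_comp.mul_const I)

/-- Along any solution of the Kowalevski equations in two constant fields, the complex
coordinates `x₁, x₂, y₁, y₂, z₁, z₂, w₁, w₂, w₃` satisfy the system (1.8) of the paper:
`dx₁/dt = i(-x₁w₃ + z₁w₁)`, etc. -/
theorem stmt_5
    (ω₁ ω₂ ω₃ α₁ α₂ α₃ β₁ β₂ β₃ : ℝ → ℝ)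
    (hω₁ : ∀ t, HasDerivAt ω₁ ((ω₂ t * ω₃ t + β₃ t) / 2) t)
    (hω₂ : ∀ t, HasDerivAt ω₂ ((-(ω₁ t * ω₃ t) - α₃ t) / 2) t)
    (hω₃ : ∀ t, HasDerivAt ω₃ (α₂ t - β₁ t) t)
    (hα₁ : ∀ t, HasDerivAt α₁ (α₂ t * ω₃ t - α₃ t * ω₂ t) t)
    (hα₂ : ∀ t, HasDerivAt α₂ (α₃ t * ω₁ t - α₁ t * ω₃ t) t)
    (hα₃ : ∀ t, HasDerivAt α₃ (α₁ t * ω₂ t - α₂ t * ω₁ t) t)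
    (hβ₁ : ∀ t, HasDerivAt β₁ (β₂ t * ω₃ t - β₃ t * ω₂ t) t)
    (hβ₂ : ∀ t, HasDerivAt β₂ (β₃ t * ω₁ t - β₁ t * ω₃ t) t)
    (hβ₃ : ∀ t, HasDerivAt β₃ (β₁ t * ω₂ t - β₂ t * ω₁ t) t)
    (x₁ x₂ y₁ y₂ z₁ z₂ w₁ w₂ w₃ : ℝ → ℂ)
    (hx₁ : x₁ = fun t => ((α₁ t - β₂ t : ℝ) : ℂ) + (α₂ t + β₁ t : ℝ) * Complex.I)
    (hx₂ : x₂ = fun t => ((α₁ t - β₂ t : ℝ) : ℂ) - (α₂ t + β₁ t : ℝ) * Complex.I)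
    (hy₁ : y₁ = fun t => ((α₁ t + β₂ t : ℝ) : ℂ) + (α₂ t - β₁ t : ℝ) * Complex.I)
    (hy₂ : y₂ = fun t => ((α₁ t + β₂ t : ℝ) : ℂ) - (α₂ t - β₁ t : ℝ) * Complex.I)
    (hz₁ : z₁ = fun t => ((α₃ t : ℝ) : ℂ) + (β₃ t : ℝ) * Complex.I)
    (hz₂ : z₂ = fun t => ((α₃ t : ℝ) : ℂ) - (β₃ t : ℝ) * Complex.I)
    (hw₁ : w₁ = fun t => ((ω₁ t : ℝ) : ℂ) + (ω₂ t : ℝ) * Complex.I)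
    (hw₂ : w₂ = fun t => ((ω₁ t : ℝ) : ℂ) - (ω₂ t : ℝ) * Complex.I)
    (hw₃ : w₃ = fun t => ((ω₃ t : ℝ) : ℂ)) :
    ∀ t : ℝ,
      HasDerivAt x₁ (Complex.I * (-(x₁ t * w₃ t) + z₁ t * w₁ t)) t ∧
      HasDerivAt x₂ (Complex.I * (x₂ t * w₃ t - z₂ t * w₂ t)) t ∧
      HasDerivAt y₁ (Complex.I * (-(y₁ t * w₃ t) + z₂ t * w₁ t)) t ∧
      HasDerivAt y₂ (Complex.I * (y₂ t * w₃ t - z₁ t * w₂ t)) t ∧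
      HasDerivAt z₁ (Complex.I * (x₁ t * w₂ t - y₂ t * w₁ t) / 2) t ∧
      HasDerivAt z₂ (Complex.I * (-(x₂ t * w₁ t) + y₁ t * w₂ t) / 2) t ∧
      HasDerivAt w₁ (-(Complex.I * (w₁ t * w₃ t + z₁ t)) / 2) t ∧
      HasDerivAt w₂ (Complex.I * (w₂ t * w₃ t + z₂ t) / 2) t ∧
      HasDerivAt w₃ (Complex.I * (y₂ t - y₁ t) / 2) t := by
  subst hx₁ hx₂ hy₁ hy₂ hz₁ hz₂ hw₁ hw₂ hw₃
  intro t
  refine ⟨(((hα₁ t).sub (hβ₂ t)).ofReal_add_ofReal_mul_I ((hα₂ t).add (hβ₁ t))).congr_deriv ?_,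
    (((hα₁ t).sub (hβ₂ t)).ofReal_sub_ofReal_mul_I ((hα₂ t).add (hβ₁ t))).congr_deriv ?_,
    (((hα₁ t).add (hβ₂ t)).ofReal_add_ofReal_mul_I ((hα₂ t).sub (hβ₁ t))).congr_deriv ?_,
    (((hα₁ t).add (hβ₂ t)).ofReal_sub_ofReal_mul_I ((hα₂ t).sub (hβ₁ t))).congr_deriv ?_,
    ((hα₃ t).ofReal_add_ofReal_mul_I (hβ₃ t)).congr_deriv ?_,
    ((hα₃ t).ofReal_sub_ofReal_mul_I (hβ₃ t)).congr_deriv ?_,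
    ((hω₁ t).ofReal_add_ofReal_mul_I (hω₂ t)).congr_deriv ?_,
    ((hω₁ t).ofReal_sub_ofReal_mul_I (hω₂ t)).congr_deriv ?_,
    (hω₃ t).ofReal_comp.congr_deriv ?_⟩ <;>
  apply Complex.ext <;> simp <;> ring
end

section
/- Let α₁,α₂,α₃,β₁,β₂,β₃, a, b be real numbers and set r² = a² − b², p² = a² + b², and define the complex numbers x₁ = (α₁−β₂) + i(α₂+β₁), x₂ = (α₁−β₂) − i(α₂+β₁), y₁ = (α₁+β₂) + i(α₂−β₁), y₂ = (α₁+β₂) − i(α₂−β₁), z₁ = α₃ + iβ₃, z₂ = α₃ − iβ₃. Then the three conditions α₁²+α₂²+α₃² = a², β₁²+β₂²+β₃² = b², α₁β₁+α₂β₂+α₃β₃ = 0 hold if and only if z₁² + x₁y₂ = r², z₂² + x₂y₁ = r², and x₁x₂ + y₁y₂ + 2z₁z₂ = 2p². -/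
/-!
With `A = |α|²`, `B = |β|²` and `D = α·β`, a direct expansion gives
`z₁² + x₁y₂ = (A - B) + 2Di`, its complex conjugate `z₂² + x₂y₁ = (A - B) - 2Di`, and
`x₁x₂ + y₁y₂ + 2z₁z₂ = |x₁|² + |y₁|² + 2|z₁|² = 2(A + B)`. Comparing real and imaginary parts,
the complex system says `A - B = a² - b²`, `D = 0`, `A + B = a² + b²`, which is the real system.
-/

open Complex

namespace Complex

lemma ofReal_add_ofReal_mul_I_eq_ofReal_iff (u v w : ℝ) :
    (u : ℂ) + v * I = w ↔ u = w ∧ v = 0 := by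
  simp [Complex.ext_iff]

lemma ofReal_sub_ofReal_mul_I_eq_ofReal_iff (u v w : ℝ) :
    (u : ℂ) - v * I = w ↔ u = w ∧ v = 0 := by
  simp [Complex.ext_iff]

end Complex

section

variable (α₁ α₂ α₃ β₁ β₂ β₃ : ℝ)

lemma sq_add_mul_eq_sub_add_dot_mul_I :
    ((α₃ : ℂ) + β₃ * I) ^ 2 +
        (((α₁ - β₂ : ℝ) : ℂ) + (α₂ + β₁ : ℝ) * I) * (((α₁ + β₂ : ℝ) : ℂ) - (α₂ - β₁ : ℝ) * I) =
      ((α₁ ^ 2 + α₂ ^ 2 + α₃ ^ 2 - (β₁ ^ 2 + β₂ ^ 2 + β₃ ^ 2) : ℝ) : ℂ) +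
        (2 * (α₁ * β₁ + α₂ * β₂ + α₃ * β₃) : ℝ) * I := by
  push_cast
  linear_combination ((β₃ : ℂ) ^ 2 - (α₂ : ℂ) ^ 2 + (β₁ : ℂ) ^ 2) * I_sq

lemma sq_add_mul_eq_sub_sub_dot_mul_I :
    ((α₃ : ℂ) - β₃ * I) ^ 2 +
        (((α₁ - β₂ : ℝ) : ℂ) - (α₂ + β₁ : ℝ) * I) * (((α₁ + β₂ : ℝ) : ℂ) + (α₂ - β₁ : ℝ) * I) =
      ((α₁ ^ 2 + α₂ ^ 2 + α₃ ^ 2 - (β₁ ^ 2 + β₂ ^ 2 + β₃ ^ 2) : ℝ) : ℂ) -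
        (2 * (α₁ * β₁ + α₂ * β₂ + α₃ * β₃) : ℝ) * I := by
  push_cast
  linear_combination ((β₃ : ℂ) ^ 2 - (α₂ : ℂ) ^ 2 + (β₁ : ℂ) ^ 2) * I_sq

lemma mul_conj_add_mul_conj_add_two_mul_conj_eq :
    (((α₁ - β₂ : ℝ) : ℂ) + (α₂ + β₁ : ℝ) * I) * (((α₁ - β₂ : ℝ) : ℂ) - (α₂ + β₁ : ℝ) * I) +
        (((α₁ + β₂ : ℝ) : ℂ) + (α₂ - β₁ : ℝ) * I) * (((α₁ + β₂ : ℝ) : ℂ) - (α₂ - β₁ : ℝ) * I) +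
        2 * ((α₃ : ℂ) + β₃ * I) * ((α₃ : ℂ) - β₃ * I) =
      ((2 * (α₁ ^ 2 + α₂ ^ 2 + α₃ ^ 2 + (β₁ ^ 2 + β₂ ^ 2 + β₃ ^ 2)) : ℝ) : ℂ) := by
  push_cast
  linear_combination
    (-(((α₂ : ℂ) + β₁) ^ 2) - ((α₂ : ℂ) - β₁) ^ 2 - 2 * (β₃ : ℂ) ^ 2) * I_sq

end

/-- The geometric integrals `|α|² = a²`, `|β|² = b²`, `α·β = 0` hold iff, in the complex
coordinates, `z₁² + x₁y₂ = r²`, `z₂² + x₂y₁ = r²`, `x₁x₂ + y₁y₂ + 2z₁z₂ = 2p²`,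
where `r² = a² - b²`, `p² = a² + b²`. -/
theorem stmt_6
    (α₁ α₂ α₃ β₁ β₂ β₃ a b : ℝ)
    (x₁ x₂ y₁ y₂ z₁ z₂ : ℂ)
    (hx₁ : x₁ = ((α₁ - β₂ : ℝ) : ℂ) + (α₂ + β₁ : ℝ) * Complex.I)
    (hx₂ : x₂ = ((α₁ - β₂ : ℝ) : ℂ) - (α₂ + β₁ : ℝ) * Complex.I)
    (hy₁ : y₁ = ((α₁ + β₂ : ℝ) : ℂ) + (α₂ - β₁ : ℝ) * Complex.I)
    (hy₂ : y₂ = ((α₁ + β₂ : ℝ) : ℂ) - (α₂ - β₁ : ℝ) * Complex.I)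
    (hz₁ : z₁ = ((α₃ : ℝ) : ℂ) + (β₃ : ℝ) * Complex.I)
    (hz₂ : z₂ = ((α₃ : ℝ) : ℂ) - (β₃ : ℝ) * Complex.I) :
    (α₁ ^ 2 + α₂ ^ 2 + α₃ ^ 2 = a ^ 2 ∧ β₁ ^ 2 + β₂ ^ 2 + β₃ ^ 2 = b ^ 2 ∧
      α₁ * β₁ + α₂ * β₂ + α₃ * β₃ = 0) ↔
    (z₁ ^ 2 + x₁ * y₂ = ((a ^ 2 - b ^ 2 : ℝ) : ℂ) ∧
      z₂ ^ 2 + x₂ * y₁ = ((a ^ 2 - b ^ 2 : ℝ) : ℂ) ∧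
      x₁ * x₂ + y₁ * y₂ + 2 * z₁ * z₂ = ((2 * (a ^ 2 + b ^ 2) : ℝ) : ℂ)) := by
  subst hx₁ hx₂ hy₁ hy₂ hz₁ hz₂
  rw [sq_add_mul_eq_sub_add_dot_mul_I, sq_add_mul_eq_sub_sub_dot_mul_I, mul_conj_add_mul_conj_add_two_mul_conj_eq,
    ofReal_add_ofReal_mul_I_eq_ofReal_iff, ofReal_sub_ofReal_mul_I_eq_ofReal_iff, ofReal_inj]
  constructor
  · rintro ⟨hα, hβ, hdot⟩
    refine ⟨⟨by linarith, by linarith⟩, ⟨by linarith, by linarith⟩, by linarith⟩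
  · rintro ⟨⟨hdiff, hdot⟩, -, hsum⟩
    refine ⟨by linarith, by linarith, by linarith⟩
end

section
/- Let a > b > 0 and set p² = a²+b², r² = a²−b². Let x₁,x₂,y₁,y₂,z₁,z₂,w₁,w₂ be complex numbers and w₃ a real number with x₂ = conj(x₁), y₂ = conj(y₁), z₂ = conj(z₁), w₂ = conj(w₁), w₁w₂ ≠ 0, satisfying: z₁² + x₁y₂ = r², z₂² + x₂y₁ = r², x₁x₂ + y₁y₂ + 2z₁z₂ = 2p²; R₁ = 0 and R₂ = 0 (where R₁, R₂ are as defined below); and S := −(y₂w₁ + x₁w₂ + z₁w₃)/(2w₁) = s with s a nonzero real number, T := −2s·w₁w₂ + x₁x₂ + z₁z₂ = τ with τ real. Then the integrals take the values H = (p² − τ)/(2s) + s, K = (τ² − 2p²τ + r⁴)/(4s²) + τ, and G = (p⁴ − r⁴)/(4s) + (p² − τ)s/2, where H = w₁w₂ + w₃²/2 − (y₁+y₂)/2, K = (w₁² + x₁)(w₂² + x₂), and G = (1/4)(x₁w₂ + y₂w₁ + z₁w₃)(x₂w₁ + y₁w₂ + z₂w₃) + (1/2)w₃·M_γ − b²α₁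 − a²β₂ with M_γ = 2ω₁(α₂β₃ − α₃β₂) + 2ω₂(α₃β₁ − α₁β₃) + ω₃(α₁β₂ − α₂β₁) expressed through the real variables ω₁ = Re w₁, ω₂ = Im w₁, ω₃ = w₃, α₁ = Re(x₁+y₁)/2, etc., recovered from the complex coordinates. -/
/-! Write `u = x₁w₂ + y₂w₁ + z₁w₃` and `v = x₂w₁ + y₁w₂ + z₂w₃`. The condition `S = s` with `s`
real says `u = -2sw₁`, and by conjugation `v = -2sw₂`. Put `e₁ = x₁z₂ - y₁z₁ - 2s(z₁ + w₁w₃)` and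
`e₂ = x₂z₁ - y₂z₂ - 2s(z₂ + w₂w₃)`. Modulo `u, v` the invariant `R₂` reduces to `w₂e₁ + w₁e₂`,
while `z₁v - z₂u` gives `w₁e₂ = w₂e₁`; so `R₂ = 0` forces `e₁ = e₂ = 0`. From there
`x₁x₂ - y₁y₂ = 2s(2s + y₁ + y₂ - w₃²)`, and since
`(x₁x₂ + z₁z₂)(y₁y₂ + z₁z₂) - (z₁² + x₁y₂)(z₂² + x₂y₁) = (x₁z₂ - y₁z₁)(x₂z₁ - y₂z₂)`,
the geometric relations give `16a²b² = (x₁x₂ - y₁y₂)² + 16s²(z₁ + w₁w₃)(z₂ + w₂w₃)`.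
The values of `H`, `K`, `G` follow from these identities by polynomial arithmetic. -/

section Field

variable {K : Type*} [Field K] {x₁ x₂ y₁ y₂ z₁ z₂ w₁ w₂ w₃ s τ a b : K}

theorem xz_sub_yz_eq_of_R₂_eq_zero [CharZero K] (hw₁ : w₁ ≠ 0) (hw₂ : w₂ ≠ 0)
    (hu : x₁ * w₂ + y₂ * w₁ + z₁ * w₃ = -2 * s * w₁)
    (hv : x₂ * w₁ + y₁ * w₂ + z₂ * w₃ = -2 * s * w₂)
    (hR₂ : (w₂ * z₁ + w₁ * z₂) * w₃ ^ 2 +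
      (w₂ * z₁ ^ 2 / w₁ + w₁ * z₂ ^ 2 / w₂ + w₁ * w₂ * (y₁ + y₂) +
        x₁ * w₂ ^ 2 + x₂ * w₁ ^ 2) * w₃ +
      w₂ ^ 2 * x₁ * z₁ / w₁ + w₁ ^ 2 * x₂ * z₂ / w₂ +
      x₁ * z₂ * w₂ + x₂ * z₁ * w₁ + (w₁ * z₂ - w₂ * z₁) * (y₁ - y₂) = 0) :
    x₁ * z₂ - y₁ * z₁ = 2 * s * (z₁ + w₁ * w₃) ∧
      x₂ * z₁ - y₂ * z₂ = 2 * s * (z₂ + w₂ * w₃) := by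
  have hsum : w₂ * (x₁ * z₂ - y₁ * z₁ - 2 * s * (z₁ + w₁ * w₃)) +
      w₁ * (x₂ * z₁ - y₂ * z₂ - 2 * s * (z₂ + w₂ * w₃)) = 0 := by
    linear_combination (norm := skip) hR₂ - (w₂ * z₁ / w₁ + w₂ * w₃) * hu
      - (w₁ * z₂ / w₂ + w₁ * w₃) * hv
    field_simp
    ring
  have hdiff : w₁ * (x₂ * z₁ - y₂ * z₂ - 2 * s * (z₂ + w₂ * w₃)) -
      w₂ * (x₁ * z₂ - y₁ * z₁ - 2 * s * (z₁ + w₁ * w₃)) = 0 := by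
    linear_combination z₁ * hv - z₂ * hu
  constructor
  · have : 2 * w₂ * (x₁ * z₂ - y₁ * z₁ - 2 * s * (z₁ + w₁ * w₃)) = 0 := by
      linear_combination hsum - hdiff
    simpa [hw₂, sub_eq_zero] using this
  · have : 2 * w₁ * (x₂ * z₁ - y₂ * z₂ - 2 * s * (z₂ + w₂ * w₃)) = 0 := by
      linear_combination hsum + hdiff
    simpa [hw₁, sub_eq_zero] using this

theorem xx_sub_yy_eq (hw₁ : w₁ ≠ 0)
    (hu : x₁ * w₂ + y₂ * w₁ + z₁ * w₃ = -2 * s * w₁)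
    (hv : x₂ * w₁ + y₁ * w₂ + z₂ * w₃ = -2 * s * w₂)
    (he₁ : x₁ * z₂ - y₁ * z₁ = 2 * s * (z₁ + w₁ * w₃)) :
    x₁ * x₂ - y₁ * y₂ = 2 * s * (2 * s + y₁ + y₂ - w₃ ^ 2) := by
  have : w₁ * (x₁ * x₂ - y₁ * y₂ - 2 * s * (2 * s + y₁ + y₂ - w₃ ^ 2)) = 0 := by
    linear_combination x₁ * hv - (y₁ + 2 * s) * hu - w₃ * he₁
  simpa [hw₁, sub_eq_zero] using this

theorem four_mul_sq_sub_sq_eq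
    (hgeom₁ : z₁ ^ 2 + x₁ * y₂ = a ^ 2 - b ^ 2)
    (hgeom₂ : z₂ ^ 2 + x₂ * y₁ = a ^ 2 - b ^ 2)
    (hgeom₃ : x₁ * x₂ + y₁ * y₂ + 2 * z₁ * z₂ = 2 * (a ^ 2 + b ^ 2))
    (he₁ : x₁ * z₂ - y₁ * z₁ = 2 * s * (z₁ + w₁ * w₃))
    (he₂ : x₂ * z₁ - y₂ * z₂ = 2 * s * (z₂ + w₂ * w₃)) :
    4 * ((a ^ 2 + b ^ 2) ^ 2 - (a ^ 2 - b ^ 2) ^ 2) =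
      (x₁ * x₂ - y₁ * y₂) ^ 2 + 16 * s ^ 2 * ((z₁ + w₁ * w₃) * (z₂ + w₂ * w₃)) := by
  have hcross : (x₁ * x₂ + z₁ * z₂) * (y₁ * y₂ + z₁ * z₂) - (z₁ ^ 2 + x₁ * y₂) * (z₂ ^ 2 + x₂ * y₁)
      = 4 * s ^ 2 * ((z₁ + w₁ * w₃) * (z₂ + w₂ * w₃)) := by
    linear_combination (x₂ * z₁ - y₂ * z₂) * he₁ + 2 * s * (z₁ + w₁ * w₃) * he₂
  linear_combination 4 * hcross - (x₁ * x₂ + y₁ * y₂ + 2 * z₁ * z₂ + 2 * (a ^ 2 + b ^ 2)) * hgeom₃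
    + 4 * (a ^ 2 - b ^ 2) * hgeom₁ + 4 * (z₁ ^ 2 + x₁ * y₂) * hgeom₂

theorem integralH_eq [CharZero K] (hs : s ≠ 0)
    (hgeom₃ : x₁ * x₂ + y₁ * y₂ + 2 * z₁ * z₂ = 2 * (a ^ 2 + b ^ 2))
    (hT : -(2 * s) * (w₁ * w₂) + x₁ * x₂ + z₁ * z₂ = τ)
    (hD : x₁ * x₂ - y₁ * y₂ = 2 * s * (2 * s + y₁ + y₂ - w₃ ^ 2)) :
    w₁ * w₂ + w₃ ^ 2 / 2 - (y₁ + y₂) / 2 = ((a ^ 2 + b ^ 2) - τ) / (2 * s) + s := by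
  field_simp
  linear_combination -hT + hgeom₃ / 2 + hD / 2

theorem integralK_eq [CharZero K] (hs : s ≠ 0)
    (hu : x₁ * w₂ + y₂ * w₁ + z₁ * w₃ = -2 * s * w₁)
    (hv : x₂ * w₁ + y₁ * w₂ + z₂ * w₃ = -2 * s * w₂)
    (hgeom₃ : x₁ * x₂ + y₁ * y₂ + 2 * z₁ * z₂ = 2 * (a ^ 2 + b ^ 2))
    (hT : -(2 * s) * (w₁ * w₂) + x₁ * x₂ + z₁ * z₂ = τ)
    (hD : x₁ * x₂ - y₁ * y₂ = 2 * s * (2 * s + y₁ + y₂ - w₃ ^ 2))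
    (hQ : 4 * ((a ^ 2 + b ^ 2) ^ 2 - (a ^ 2 - b ^ 2) ^ 2) =
      (x₁ * x₂ - y₁ * y₂) ^ 2 + 16 * s ^ 2 * ((z₁ + w₁ * w₃) * (z₂ + w₂ * w₃))) :
    (w₁ ^ 2 + x₁) * (w₂ ^ 2 + x₂) =
      (τ ^ 2 - 2 * (a ^ 2 + b ^ 2) * τ + (a ^ 2 - b ^ 2) ^ 2) / (4 * s ^ 2) + τ := by
  have hK : (w₁ ^ 2 + x₁) * (w₂ ^ 2 + x₂) = (w₁ * w₂) ^ 2 - (4 * s + y₁ + y₂) * (w₁ * w₂)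
      - w₃ * (z₁ * w₂ + z₂ * w₁) + x₁ * x₂ := by
    linear_combination w₂ * hu + w₁ * hv
  field_simp
  -- modulo `hT` and `hgeom₃`, `a² + b² - τ = 2s·w₁w₂ - (x₁x₂ - y₁y₂)/2`
  linear_combination 4 * s ^ 2 * hK + hQ / 4 + 4 * s ^ 2 * hT + 2 * s * (w₁ * w₂) * hD
    - ((a ^ 2 + b ^ 2) - τ + 2 * s * (w₁ * w₂) - (x₁ * x₂ - y₁ * y₂) / 2) * (hT - hgeom₃ / 2)

theorem integralG_eq [CharZero K] (hs : s ≠ 0)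
    (hu : x₁ * w₂ + y₂ * w₁ + z₁ * w₃ = -2 * s * w₁)
    (hv : x₂ * w₁ + y₁ * w₂ + z₂ * w₃ = -2 * s * w₂)
    (hgeom₁ : z₁ ^ 2 + x₁ * y₂ = a ^ 2 - b ^ 2)
    (hgeom₂ : z₂ ^ 2 + x₂ * y₁ = a ^ 2 - b ^ 2)
    (hgeom₃ : x₁ * x₂ + y₁ * y₂ + 2 * z₁ * z₂ = 2 * (a ^ 2 + b ^ 2))
    (hT : -(2 * s) * (w₁ * w₂) + x₁ * x₂ + z₁ * z₂ = τ)
    (he₁ : x₁ * z₂ - y₁ * z₁ = 2 * s * (z₁ + w₁ * w₃))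
    (he₂ : x₂ * z₁ - y₂ * z₂ = 2 * s * (z₂ + w₂ * w₃))
    (hD : x₁ * x₂ - y₁ * y₂ = 2 * s * (2 * s + y₁ + y₂ - w₃ ^ 2))
    (hQ : 4 * ((a ^ 2 + b ^ 2) ^ 2 - (a ^ 2 - b ^ 2) ^ 2) =
      (x₁ * x₂ - y₁ * y₂) ^ 2 + 16 * s ^ 2 * ((z₁ + w₁ * w₃) * (z₂ + w₂ * w₃))) :
    1 / 4 * ((x₁ * w₂ + y₂ * w₁ + z₁ * w₃) * (x₂ * w₁ + y₁ * w₂ + z₂ * w₃)) +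
      (1 / 2 * w₃ * ((2 * w₁ * (x₂ * z₁ - y₂ * z₂) + 2 * w₂ * (x₁ * z₂ - y₁ * z₁) +
          w₃ * (y₁ * y₂ - x₁ * x₂)) / 4) -
        b ^ 2 * ((x₁ + y₁ + x₂ + y₂) / 4) - a ^ 2 * ((y₁ - x₁ + y₂ - x₂) / 4)) =
      ((a ^ 2 + b ^ 2) ^ 2 - (a ^ 2 - b ^ 2) ^ 2) / (4 * s) + ((a ^ 2 + b ^ 2) - τ) * s / 2 := by
  have huv : (x₁ * w₂ + y₂ * w₁ + z₁ * w₃) * (x₂ * w₁ + y₁ * w₂ + z₂ * w₃) =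
      4 * s ^ 2 * (w₁ * w₂) := by
    linear_combination (x₂ * w₁ + y₁ * w₂ + z₂ * w₃) * hu - 2 * s * w₁ * hv
  field_simp
  linear_combination 2 * s * huv + 2 * s * (z₂ + w₂ * w₃) * he₁ + 2 * s * (z₁ + w₁ * w₃) * he₂
    - (x₁ * x₂ - y₁ * y₂) / 2 * hD - 2 * s * x₁ * hgeom₂ - 2 * s * x₂ * hgeom₁ - hQ / 2
    + (s * (y₁ + y₂) + 2 * s ^ 2) * hgeom₃ - 4 * s ^ 2 * hT

end Field

theorem stmt_7_general
    (a b s τ : ℝ) (hs : s ≠ 0)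
    (x₁ x₂ y₁ y₂ z₁ z₂ w₁ w₂ : ℂ) (w₃ : ℝ)
    (hx₂ : x₂ = starRingEnd ℂ x₁) (hy₂ : y₂ = starRingEnd ℂ y₁)
    (hz₂ : z₂ = starRingEnd ℂ z₁) (hw₂ : w₂ = starRingEnd ℂ w₁)
    (hw : w₁ * w₂ ≠ 0)
    (hgeom₁ : z₁ ^ 2 + x₁ * y₂ = ((a ^ 2 - b ^ 2 : ℝ) : ℂ))
    (hgeom₂ : z₂ ^ 2 + x₂ * y₁ = ((a ^ 2 - b ^ 2 : ℝ) : ℂ))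
    (hgeom₃ : x₁ * x₂ + y₁ * y₂ + 2 * z₁ * z₂ = ((2 * (a ^ 2 + b ^ 2) : ℝ) : ℂ))
    (hR₂ : (w₂ * z₁ + w₁ * z₂) * (w₃ : ℂ) ^ 2 +
      (w₂ * z₁ ^ 2 / w₁ + w₁ * z₂ ^ 2 / w₂ + w₁ * w₂ * (y₁ + y₂) +
        x₁ * w₂ ^ 2 + x₂ * w₁ ^ 2) * w₃ +
      w₂ ^ 2 * x₁ * z₁ / w₁ + w₁ ^ 2 * x₂ * z₂ / w₂ +
      x₁ * z₂ * w₂ + x₂ * z₁ * w₁ + (w₁ * z₂ - w₂ * z₁) * (y₁ - y₂) = 0)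
    (hS : -(y₂ * w₁ + x₁ * w₂ + z₁ * w₃) / (2 * w₁) = (s : ℂ))
    (hT : -(2 * s) * (w₁ * w₂) + x₁ * x₂ + z₁ * z₂ = (τ : ℂ))
    (ω₁ ω₂ ω₃ α₁ α₂ α₃ β₁ β₂ β₃ : ℝ)
    (hω₁ : ω₁ = w₁.re) (hω₂ : ω₂ = w₁.im) (hω₃ : ω₃ = w₃)
    (hα₁ : α₁ = ((x₁ + y₁) / 2).re) (hα₂ : α₂ = ((x₁ + y₁) / 2).im)
    (hα₃ : α₃ = z₁.re)
    (hβ₁ : β₁ = -((y₁ - x₁) / 2).im) (hβ₂ : β₂ = ((y₁ - x₁) / 2).re)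
    (hβ₃ : β₃ = z₁.im)
    (Mγ : ℝ)
    (hMγ : Mγ = 2 * ω₁ * (α₂ * β₃ - α₃ * β₂) + 2 * ω₂ * (α₃ * β₁ - α₁ * β₃) +
      ω₃ * (α₁ * β₂ - α₂ * β₁)) :
    w₁ * w₂ + (w₃ : ℂ) ^ 2 / 2 - (y₁ + y₂) / 2 =
      ((((a ^ 2 + b ^ 2) - τ) / (2 * s) + s : ℝ) : ℂ) ∧
    (w₁ ^ 2 + x₁) * (w₂ ^ 2 + x₂) =
      (((τ ^ 2 - 2 * (a ^ 2 + b ^ 2) * τ + (a ^ 2 - b ^ 2) ^ 2) / (4 * s ^ 2) + τ : ℝ) : ℂ) ∧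
    (1 / 4 : ℂ) * ((x₁ * w₂ + y₂ * w₁ + z₁ * w₃) * (x₂ * w₁ + y₁ * w₂ + z₂ * w₃)) +
      ((1 / 2 * w₃ * Mγ - b ^ 2 * α₁ - a ^ 2 * β₂ : ℝ) : ℂ) =
      ((((a ^ 2 + b ^ 2) ^ 2 - (a ^ 2 - b ^ 2) ^ 2) / (4 * s) +
        ((a ^ 2 + b ^ 2) - τ) * s / 2 : ℝ) : ℂ) := by
  have hw₁ : w₁ ≠ 0 := left_ne_zero_of_mul hw
  have hs' : (s : ℂ) ≠ 0 := Complex.ofReal_ne_zero.mpr hs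
  have hu : x₁ * w₂ + y₂ * w₁ + z₁ * w₃ = -2 * s * w₁ := by
    rw [div_eq_iff (mul_ne_zero two_ne_zero hw₁)] at hS
    linear_combination -hS
  have hv : x₂ * w₁ + y₁ * w₂ + z₂ * w₃ = -2 * s * w₂ := by
    subst hx₂ hy₂ hz₂ hw₂
    simpa [map_ofNat] using congrArg (starRingEnd ℂ) hu
  obtain ⟨he₁, he₂⟩ := xz_sub_yz_eq_of_R₂_eq_zero hw₁ (right_ne_zero_of_mul hw) hu hv hR₂
  have hD := xx_sub_yy_eq hw₁ hu hv he₁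
  push_cast at hgeom₁ hgeom₂ hgeom₃ ⊢
  have hQ := four_mul_sq_sub_sq_eq hgeom₁ hgeom₂ hgeom₃ he₁ he₂
  have hM : (Mγ : ℂ) = (2 * w₁ * (x₂ * z₁ - y₂ * z₂) + 2 * w₂ * (x₁ * z₂ - y₁ * z₁) +
      w₃ * (y₁ * y₂ - x₁ * x₂)) / 4 := by
    subst_vars
    apply Complex.ext <;> simp [Complex.mul_re, Complex.mul_im] <;> ring
  have hα : (α₁ : ℂ) = (x₁ + y₁ + x₂ + y₂) / 4 := by
    subst_vars
    exact Complex.ext (by simp; ring) (by simp)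
  have hβ : (β₂ : ℂ) = (y₁ - x₁ + y₂ - x₂) / 4 := by
    subst_vars
    apply Complex.ext <;> simp <;> ring
  refine ⟨integralH_eq hs' hgeom₃ hT hD, integralK_eq hs' hu hv hgeom₃ hT hD hQ, ?_⟩
  rw [hM, hα, hβ]
  linear_combination integralG_eq hs' hu hv hgeom₁ hgeom₂ hgeom₃ hT he₁ he₂ hD hQ

/-- On the invariant set `𝔒` (given by `R₁ = 0`, `R₂ = 0`) with partial integral values
`S = s ≠ 0`, `T = τ`, the integrals `H`, `K`, `G` take the values
`h = (p² - τ)/(2s) + s`, `k = (τ² - 2p²τ + r⁴)/(4s²) + τ`,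
`g = (p⁴ - r⁴)/(4s) + (p² - τ)s/2`, where `p² = a² + b²`, `r² = a² - b²`. -/
theorem stmt_7
    (a b s τ : ℝ) (hab : b < a) (hb : 0 < b) (hs : s ≠ 0)
    (x₁ x₂ y₁ y₂ z₁ z₂ w₁ w₂ : ℂ) (w₃ : ℝ)
    (hx₂ : x₂ = starRingEnd ℂ x₁) (hy₂ : y₂ = starRingEnd ℂ y₁)
    (hz₂ : z₂ = starRingEnd ℂ z₁) (hw₂ : w₂ = starRingEnd ℂ w₁)
    (hw : w₁ * w₂ ≠ 0)
    (hgeom₁ : z₁ ^ 2 + x₁ * y₂ = ((a ^ 2 - b ^ 2 : ℝ) : ℂ))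
    (hgeom₂ : z₂ ^ 2 + x₂ * y₁ = ((a ^ 2 - b ^ 2 : ℝ) : ℂ))
    (hgeom₃ : x₁ * x₂ + y₁ * y₂ + 2 * z₁ * z₂ = ((2 * (a ^ 2 + b ^ 2) : ℝ) : ℂ))
    (hR₁ : (w₂ * x₁ + w₁ * y₂ + w₃ * z₁) / w₁ - (w₁ * x₂ + w₂ * y₁ + w₃ * z₂) / w₂ = 0)
    (hR₂ : (w₂ * z₁ + w₁ * z₂) * (w₃ : ℂ) ^ 2 +
      (w₂ * z₁ ^ 2 / w₁ + w₁ * z₂ ^ 2 / w₂ + w₁ * w₂ * (y₁ + y₂) +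
        x₁ * w₂ ^ 2 + x₂ * w₁ ^ 2) * w₃ +
      w₂ ^ 2 * x₁ * z₁ / w₁ + w₁ ^ 2 * x₂ * z₂ / w₂ +
      x₁ * z₂ * w₂ + x₂ * z₁ * w₁ + (w₁ * z₂ - w₂ * z₁) * (y₁ - y₂) = 0)
    (hS : -(y₂ * w₁ + x₁ * w₂ + z₁ * w₃) / (2 * w₁) = (s : ℂ))
    (hT : -(2 * s) * (w₁ * w₂) + x₁ * x₂ + z₁ * z₂ = (τ : ℂ))
    (ω₁ ω₂ ω₃ α₁ α₂ α₃ β₁ β₂ β₃ : ℝ)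
    (hω₁ : ω₁ = w₁.re) (hω₂ : ω₂ = w₁.im) (hω₃ : ω₃ = w₃)
    (hα₁ : α₁ = ((x₁ + y₁) / 2).re) (hα₂ : α₂ = ((x₁ + y₁) / 2).im)
    (hα₃ : α₃ = z₁.re)
    (hβ₁ : β₁ = -((y₁ - x₁) / 2).im) (hβ₂ : β₂ = ((y₁ - x₁) / 2).re)
    (hβ₃ : β₃ = z₁.im)
    (Mγ : ℝ)
    (hMγ : Mγ = 2 * ω₁ * (α₂ * β₃ - α₃ * β₂) + 2 * ω₂ * (α₃ * β₁ - α₁ * β₃) +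
      ω₃ * (α₁ * β₂ - α₂ * β₁)) :
    w₁ * w₂ + (w₃ : ℂ) ^ 2 / 2 - (y₁ + y₂) / 2 =
      ((((a ^ 2 + b ^ 2) - τ) / (2 * s) + s : ℝ) : ℂ) ∧
    (w₁ ^ 2 + x₁) * (w₂ ^ 2 + x₂) =
      (((τ ^ 2 - 2 * (a ^ 2 + b ^ 2) * τ + (a ^ 2 - b ^ 2) ^ 2) / (4 * s ^ 2) + τ : ℝ) : ℂ) ∧
    (1 / 4 : ℂ) * ((x₁ * w₂ + y₂ * w₁ + z₁ * w₃) * (x₂ * w₁ + y₁ * w₂ + z₂ * w₃)) +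
      ((1 / 2 * w₃ * Mγ - b ^ 2 * α₁ - a ^ 2 * β₂ : ℝ) : ℂ) =
      ((((a ^ 2 + b ^ 2) ^ 2 - (a ^ 2 - b ^ 2) ^ 2) / (4 * s) +
        ((a ^ 2 + b ^ 2) - τ) * s / 2 : ℝ) : ℂ) :=
  stmt_7_general a b s τ hs x₁ x₂ y₁ y₂ z₁ z₂ w₁ w₂ w₃ hx₂ hy₂ hz₂ hw₂ hw hgeom₁ hgeom₂ hgeom₃ hR₂
    hS hT ω₁ ω₂ ω₃ α₁ α₂ α₃ β₁ β₂ β₃ hω₁ hω₂ hω₃ hα₁ hα₂ hα₃ hβ₁ hβ₂ hβ₃ Mγ hMγ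
end

section
/- Let p, r, s, τ be real numbers with s ≠ 0, and define h = (p² − τ)/(2s) + s, k = (τ² − 2p²τ + r⁴)/(4s²) + τ, g = (p⁴ − r⁴)/(4s) + (p² − τ)s/2. Then the polynomial ψ(w) = w²(w − h)² + (p² − k)w² − 2g·w + (p⁴ − r⁴)/4 satisfies ψ(s) = 0 and ψ'(s) = 0, i.e., s is a multiple root of ψ. -/
/-! The quartic `ψ` factors as `(w - s)² (w² - ((p² - τ)/s) w + (p⁴ - r⁴)/(4s²))`: comparing
coefficients, `h` fixes the cubic term, `k` the quadratic one and `g` the linear one. A factor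
`(w - s)²` makes `s` a root of `ψ` and of `ψ'`. -/

theorem hasDerivAt_sub_sq_mul_zero {𝕜 : Type*} [NontriviallyNormedField 𝕜] {q : 𝕜 → 𝕜} {s : 𝕜}
    (hq : DifferentiableAt 𝕜 q s) : HasDerivAt (fun w => (w - s) ^ 2 * q w) 0 s := by
  simpa using (((hasDerivAt_id s).sub_const s).fun_pow 2).fun_mul hq.hasDerivAt

/-- For `h = (p² - τ)/(2s) + s`, `k = (τ² - 2p²τ + r⁴)/(4s²) + τ`,
`g = (p⁴ - r⁴)/(4s) + (p² - τ)s/2`, the polynomial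
`ψ(w) = w²(w - h)² + (p² - k)w² - 2gw + (p⁴ - r⁴)/4` has `s` as a multiple root:
`ψ(s) = 0` and `ψ'(s) = 0`. -/
theorem stmt_8
    (p r s τ : ℝ) (hs : s ≠ 0)
    (h k g : ℝ)
    (hh : h = (p ^ 2 - τ) / (2 * s) + s)
    (hk : k = (τ ^ 2 - 2 * p ^ 2 * τ + r ^ 4) / (4 * s ^ 2) + τ)
    (hg : g = (p ^ 4 - r ^ 4) / (4 * s) + (p ^ 2 - τ) * s / 2)
    (ψ : ℝ → ℝ)
    (hψ : ψ = fun w => w ^ 2 * (w - h) ^ 2 + (p ^ 2 - k) * w ^ 2 - 2 * g * w +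
      (p ^ 4 - r ^ 4) / 4) :
    ψ s = 0 ∧ HasDerivAt ψ 0 s := by
  have hfactor : ψ = fun w =>
      (w - s) ^ 2 * (w ^ 2 - (p ^ 2 - τ) / s * w + (p ^ 4 - r ^ 4) / (4 * s ^ 2)) := by
    subst hψ hh hk hg
    funext w
    field_simp
    ring
  subst hfactor
  exact ⟨by simp, hasDerivAt_sub_sq_mul_zero (by fun_prop)⟩
end

section
/- Let r, p be real numbers and let x₁,x₂,y₁,y₂,z₁,z₂ be complex numbers with x₂ = conj(x₁), y₂ = conj(y₁), z₂ = conj(z₁), satisfying z₁² + x₁y₂ = r², z₂² + x₂y₁ = r², and x₁x₂ + y₁y₂ + 2z₁z₂ = 2p². Set x² = x₁x₂ and z² = z₁z₂ (nonnegative reals). Then r²(z₁ + z₂)² = (x² + z² + r²)² − 2(p² + r²)x² and r²(z₁ − z₂)² = (x² + z² − r²)² − 2(p² − r²)x². -/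
/-! Multiplying the first two relations gives `x₁x₂ · y₁y₂ = (r² - z₁²)(r² - z₂²)`, and the third
expresses `y₁y₂` through `x₁x₂` and `z₁z₂`; both claimed identities are polynomial consequences
of these two facts. -/

section

variable {R : Type*} [CommRing R] (r₂ p₂ x₁ x₂ y₁ y₂ z₁ z₂ : R)

theorem mul_mul_mul_eq_of_add_mul_eq (h₁ : z₁ ^ 2 + x₁ * y₂ = r₂) (h₂ : z₂ ^ 2 + x₂ * y₁ = r₂) :
    (x₁ * x₂) * (y₁ * y₂) = (r₂ - z₁ ^ 2) * (r₂ - z₂ ^ 2) := by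
  linear_combination (x₂ * y₁) * h₁ + (r₂ - z₁ ^ 2) * h₂

variable {r₂ p₂ x₁ x₂ y₁ y₂ z₁ z₂}
variable (h₁ : z₁ ^ 2 + x₁ * y₂ = r₂) (h₂ : z₂ ^ 2 + x₂ * y₁ = r₂)
  (h₃ : x₁ * x₂ + y₁ * y₂ + 2 * z₁ * z₂ = 2 * p₂)
include h₁ h₂ h₃

theorem mul_add_sq_eq_of_add_mul_eq :
    r₂ * (z₁ + z₂) ^ 2 = (x₁ * x₂ + z₁ * z₂ + r₂) ^ 2 - 2 * (p₂ + r₂) * (x₁ * x₂) := by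
  linear_combination mul_mul_mul_eq_of_add_mul_eq r₂ x₁ x₂ y₁ y₂ z₁ z₂ h₁ h₂ - (x₁ * x₂) * h₃

theorem mul_sub_sq_eq_of_add_mul_eq :
    r₂ * (z₁ - z₂) ^ 2 = (x₁ * x₂ + z₁ * z₂ - r₂) ^ 2 - 2 * (p₂ - r₂) * (x₁ * x₂) := by
  linear_combination mul_mul_mul_eq_of_add_mul_eq r₂ x₁ x₂ y₁ y₂ z₁ z₂ h₁ h₂ - (x₁ * x₂) * h₃

end

theorem stmt_9_general
    (r p : ℝ)
    (x₁ x₂ y₁ y₂ z₁ z₂ : ℂ)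
    (hgeom₁ : z₁ ^ 2 + x₁ * y₂ = ((r ^ 2 : ℝ) : ℂ))
    (hgeom₂ : z₂ ^ 2 + x₂ * y₁ = ((r ^ 2 : ℝ) : ℂ))
    (hgeom₃ : x₁ * x₂ + y₁ * y₂ + 2 * z₁ * z₂ = ((2 * p ^ 2 : ℝ) : ℂ))
    (x2 z2 : ℝ)
    (hx2 : (x2 : ℂ) = x₁ * x₂) (hz2 : (z2 : ℂ) = z₁ * z₂) :
    (r ^ 2 : ℂ) * (z₁ + z₂) ^ 2 =
        (((x2 + z2 + r ^ 2) ^ 2 - 2 * (p ^ 2 + r ^ 2) * x2 : ℝ) : ℂ) ∧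
    (r ^ 2 : ℂ) * (z₁ - z₂) ^ 2 =
        (((x2 + z2 - r ^ 2) ^ 2 - 2 * (p ^ 2 - r ^ 2) * x2 : ℝ) : ℂ) := by
  push_cast at hgeom₁ hgeom₂ hgeom₃ ⊢
  rw [hx2, hz2]
  exact ⟨mul_add_sq_eq_of_add_mul_eq hgeom₁ hgeom₂ hgeom₃,
    mul_sub_sq_eq_of_add_mul_eq hgeom₁ hgeom₂ hgeom₃⟩

/-- Under the geometric relations, with `x² = x₁x₂` and `z² = z₁z₂`, one has
`r²(z₁ + z₂)² = (x² + z² + r²)² - 2(p² + r²)x²` and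
`r²(z₁ - z₂)² = (x² + z² - r²)² - 2(p² - r²)x²`. -/
theorem stmt_9
    (r p : ℝ)
    (x₁ x₂ y₁ y₂ z₁ z₂ : ℂ)
    (hx₂ : x₂ = starRingEnd ℂ x₁) (hy₂ : y₂ = starRingEnd ℂ y₁)
    (hz₂ : z₂ = starRingEnd ℂ z₁)
    (hgeom₁ : z₁ ^ 2 + x₁ * y₂ = ((r ^ 2 : ℝ) : ℂ))
    (hgeom₂ : z₂ ^ 2 + x₂ * y₁ = ((r ^ 2 : ℝ) : ℂ))
    (hgeom₃ : x₁ * x₂ + y₁ * y₂ + 2 * z₁ * z₂ = ((2 * p ^ 2 : ℝ) : ℂ))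
    (x2 z2 : ℝ)
    (hx2 : (x2 : ℂ) = x₁ * x₂) (hz2 : (z2 : ℂ) = z₁ * z₂) :
    (r ^ 2 : ℂ) * (z₁ + z₂) ^ 2 =
        (((x2 + z2 + r ^ 2) ^ 2 - 2 * (p ^ 2 + r ^ 2) * x2 : ℝ) : ℂ) ∧
    (r ^ 2 : ℂ) * (z₁ - z₂) ^ 2 =
        (((x2 + z2 - r ^ 2) ^ 2 - 2 * (p ^ 2 - r ^ 2) * x2 : ℝ) : ℂ) :=
  stmt_9_general r p x₁ x₂ y₁ y₂ z₁ z₂ hgeom₁ hgeom₂ hgeom₃ x2 z2 hx2 hz2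
end

section
/- Let a > b > 0, p² = a²+b², r² = a²−b², and let s ≠ 0, τ be real; set σ = τ² − 2p²τ + r⁴. Let x₁,x₂,y₁,y₂,z₁,z₂,w₁,w₂ be complex and w₃ real with x₂ = conj(x₁), y₂ = conj(y₁), z₂ = conj(z₁), w₂ = conj(w₁), (w₁,w₂,w₃) ≠ (0,0,0), satisfying (y₂ + 2s)w₁ + x₁w₂ + z₁w₃ = 0, x₂w₁ + (y₁ + 2s)w₂ + z₂w₃ = 0, x₂z₁w₁ + x₁z₂w₂ + (τ − x₁x₂)w₃ = 0, 2s·w₁w₂ − (x₁x₂ + z₁z₂) + τ = 0, z₁² + x₁y₂ = r², z₂² + x₂y₁ = r², x₁x₂ + y₁y₂ + 2z₁z₂ = 2p². Define μ₁ = r²x₁ − τy₁, μ₂ = r²x₂ − τy₂, ξ = 2s·w₁w₂, x² = x₁x₂. Then 2s(μ₁ + μ₂) = ξ² − 4s²(x² − τ) − σ and μ₁μ₂ = τξ² + σx² − τσ. -/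
/-!
The equations for `w₁, w₂, w₃` form a homogeneous linear system with a nonzero solution, so its
coefficient determinant vanishes. Once `ξ = 2s·w₁w₂` is eliminated via `ξ = x₁x₂ + z₁z₂ - τ`,
the vanishing of this determinant, reduced modulo the three quadratic relations between
`x, y, z`, is the identity for `2s(μ₁ + μ₂)`. The identity for `μ₁μ₂` follows from the quadratic
relations and the expression for `ξ` alone.
-/

section Identities

variable {R : Type*} [CommRing R]

def systemMatrix (s τ x₁ x₂ y₁ y₂ z₁ z₂ : R) : Matrix (Fin 3) (Fin 3) R :=
  !![y₂ + 2 * s, x₁, z₁; x₂, y₁ + 2 * s, z₂; x₂ * z₁, x₁ * z₂, τ - x₁ * x₂]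

theorem det_systemMatrix_eq_zero [IsDomain R] {s τ x₁ x₂ y₁ y₂ z₁ z₂ w₁ w₂ w₃ : R}
    (hw : ¬(w₁ = 0 ∧ w₂ = 0 ∧ w₃ = 0))
    (heq₁ : (y₂ + 2 * s) * w₁ + x₁ * w₂ + z₁ * w₃ = 0)
    (heq₂ : x₂ * w₁ + (y₁ + 2 * s) * w₂ + z₂ * w₃ = 0)
    (heq₃ : x₂ * z₁ * w₁ + x₁ * z₂ * w₂ + (τ - x₁ * x₂) * w₃ = 0) :
    (systemMatrix s τ x₁ x₂ y₁ y₂ z₁ z₂).det = 0 := by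
  refine Matrix.exists_mulVec_eq_zero_iff.mp ⟨![w₁, w₂, w₃], ?_, ?_⟩
  · simpa [funext_iff, Fin.forall_fin_succ] using hw
  · ext i
    fin_cases i <;>
      simp only [Matrix.mulVec, dotProduct, systemMatrix, Fin.sum_univ_three, Fin.zero_eta,
        Fin.mk_one, Fin.reduceFinMk, Fin.isValue, Matrix.of_apply, Matrix.cons_val',
        Matrix.cons_val_fin_one, Matrix.cons_val_zero, Matrix.cons_val_one, Matrix.cons_val,
        Pi.zero_apply]
    · linear_combination heq₁
    · linear_combination heq₂
    · linear_combination heq₃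

theorem two_mul_mu_add_mu_eq {r p s τ x₁ x₂ y₁ y₂ z₁ z₂ ξ : R}
    (hdet : (systemMatrix s τ x₁ x₂ y₁ y₂ z₁ z₂).det = 0)
    (hgeom₁ : z₁ ^ 2 + x₁ * y₂ = r) (hgeom₂ : z₂ ^ 2 + x₂ * y₁ = r)
    (hgeom₃ : x₁ * x₂ + y₁ * y₂ + 2 * z₁ * z₂ = 2 * p)
    (hξ : ξ + τ = x₁ * x₂ + z₁ * z₂) :
    2 * s * ((r * x₁ - τ * y₁) + (r * x₂ - τ * y₂)) =
      ξ ^ 2 - 4 * s ^ 2 * (x₁ * x₂ - τ) - (τ ^ 2 - 2 * p * τ + r ^ 2) := by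
  rw [Matrix.det_fin_three] at hdet
  simp only [systemMatrix, Matrix.of_apply, Matrix.cons_val', Matrix.cons_val_zero,
    Matrix.cons_val_one, Matrix.cons_val_two, Matrix.empty_val', Matrix.cons_val_fin_one,
    Matrix.head_cons, Matrix.tail_cons, Matrix.head_fin_const] at hdet
  linear_combination -(ξ + x₁ * x₂ + z₁ * z₂ - τ) * hξ - hdet
    + (-r - 2 * s * x₂) * hgeom₁ + (-(z₁ ^ 2) - 2 * s * x₁ - x₁ * y₂) * hgeom₂ + τ * hgeom₃

theorem mu_mul_mu_eq {r p τ x₁ x₂ y₁ y₂ z₁ z₂ ξ : R}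
    (hgeom₁ : z₁ ^ 2 + x₁ * y₂ = r) (hgeom₂ : z₂ ^ 2 + x₂ * y₁ = r)
    (hgeom₃ : x₁ * x₂ + y₁ * y₂ + 2 * z₁ * z₂ = 2 * p)
    (hξ : ξ + τ = x₁ * x₂ + z₁ * z₂) :
    (r * x₁ - τ * y₁) * (r * x₂ - τ * y₂) =
      τ * ξ ^ 2 + (τ ^ 2 - 2 * p * τ + r ^ 2) * (x₁ * x₂) - τ * (τ ^ 2 - 2 * p * τ + r ^ 2) := by
  linear_combination -τ * (ξ + x₁ * x₂ + z₁ * z₂ - τ) * hξ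
    - τ * z₂ ^ 2 * hgeom₁ + (-τ * r + τ * (x₁ * y₂)) * hgeom₂ + (τ ^ 2 - τ * (x₁ * x₂)) * hgeom₃

end Identities

theorem stmt_10_general
    (a b s τ σ : ℝ)
    (hσ : σ = τ ^ 2 - 2 * (a ^ 2 + b ^ 2) * τ + (a ^ 2 - b ^ 2) ^ 2)
    (x₁ x₂ y₁ y₂ z₁ z₂ w₁ w₂ : ℂ) (w₃ : ℝ)
    (hw : ¬(w₁ = 0 ∧ w₂ = 0 ∧ w₃ = 0))
    (heq₁ : (y₂ + 2 * s) * w₁ + x₁ * w₂ + z₁ * (w₃ : ℂ) = 0)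
    (heq₂ : x₂ * w₁ + (y₁ + 2 * s) * w₂ + z₂ * (w₃ : ℂ) = 0)
    (heq₃ : x₂ * z₁ * w₁ + x₁ * z₂ * w₂ + ((τ : ℂ) - x₁ * x₂) * w₃ = 0)
    (heq₄ : 2 * (s : ℂ) * (w₁ * w₂) - (x₁ * x₂ + z₁ * z₂) + (τ : ℂ) = 0)
    (hgeom₁ : z₁ ^ 2 + x₁ * y₂ = ((a ^ 2 - b ^ 2 : ℝ) : ℂ))
    (hgeom₂ : z₂ ^ 2 + x₂ * y₁ = ((a ^ 2 - b ^ 2 : ℝ) : ℂ))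
    (hgeom₃ : x₁ * x₂ + y₁ * y₂ + 2 * z₁ * z₂ = ((2 * (a ^ 2 + b ^ 2) : ℝ) : ℂ))
    (μ₁ μ₂ ξ x2 : ℂ)
    (hμ₁ : μ₁ = ((a ^ 2 - b ^ 2 : ℝ) : ℂ) * x₁ - (τ : ℂ) * y₁)
    (hμ₂ : μ₂ = ((a ^ 2 - b ^ 2 : ℝ) : ℂ) * x₂ - (τ : ℂ) * y₂)
    (hξ : ξ = 2 * (s : ℂ) * (w₁ * w₂))
    (hx2 : x2 = x₁ * x₂) :
    2 * (s : ℂ) * (μ₁ + μ₂) = ξ ^ 2 - 4 * (s : ℂ) ^ 2 * (x2 - (τ : ℂ)) - (σ : ℂ) ∧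
    μ₁ * μ₂ = (τ : ℂ) * ξ ^ 2 + (σ : ℂ) * x2 - (τ : ℂ) * (σ : ℂ) := by
  have hdet := det_systemMatrix_eq_zero (w₃ := (w₃ : ℂ)) (by exact_mod_cast hw) heq₁ heq₂ heq₃
  have hξ' : ξ + τ = x₁ * x₂ + z₁ * z₂ := by linear_combination hξ + heq₄
  subst hσ hμ₁ hμ₂ hx2
  push_cast at hgeom₁ hgeom₂ hgeom₃ ⊢
  exact ⟨two_mul_mu_add_mu_eq hdet hgeom₁ hgeom₂ hgeom₃ hξ', mu_mul_mu_eq hgeom₁ hgeom₂ hgeom₃ hξ'⟩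

/-- On the integral manifold, the variables `μ₁ = r²x₁ - τy₁`, `μ₂ = r²x₂ - τy₂` satisfy
`2s(μ₁ + μ₂) = ξ² - 4s²(x² - τ) - σ` and `μ₁μ₂ = τξ² + σx² - τσ`, where
`ξ = 2s·w₁w₂`, `x² = x₁x₂`, `σ = τ² - 2p²τ + r⁴`. -/
theorem stmt_10
    (a b s τ σ : ℝ) (hab : b < a) (hb : 0 < b) (hs : s ≠ 0)
    (hσ : σ = τ ^ 2 - 2 * (a ^ 2 + b ^ 2) * τ + (a ^ 2 - b ^ 2) ^ 2)
    (x₁ x₂ y₁ y₂ z₁ z₂ w₁ w₂ : ℂ) (w₃ : ℝ)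
    (hx₂ : x₂ = starRingEnd ℂ x₁) (hy₂ : y₂ = starRingEnd ℂ y₁)
    (hz₂ : z₂ = starRingEnd ℂ z₁) (hw₂ : w₂ = starRingEnd ℂ w₁)
    (hw : ¬(w₁ = 0 ∧ w₂ = 0 ∧ w₃ = 0))
    (heq₁ : (y₂ + 2 * s) * w₁ + x₁ * w₂ + z₁ * (w₃ : ℂ) = 0)
    (heq₂ : x₂ * w₁ + (y₁ + 2 * s) * w₂ + z₂ * (w₃ : ℂ) = 0)
    (heq₃ : x₂ * z₁ * w₁ + x₁ * z₂ * w₂ + ((τ : ℂ) - x₁ * x₂) * w₃ = 0)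
    (heq₄ : 2 * (s : ℂ) * (w₁ * w₂) - (x₁ * x₂ + z₁ * z₂) + (τ : ℂ) = 0)
    (hgeom₁ : z₁ ^ 2 + x₁ * y₂ = ((a ^ 2 - b ^ 2 : ℝ) : ℂ))
    (hgeom₂ : z₂ ^ 2 + x₂ * y₁ = ((a ^ 2 - b ^ 2 : ℝ) : ℂ))
    (hgeom₃ : x₁ * x₂ + y₁ * y₂ + 2 * z₁ * z₂ = ((2 * (a ^ 2 + b ^ 2) : ℝ) : ℂ))
    (μ₁ μ₂ ξ x2 : ℂ)
    (hμ₁ : μ₁ = ((a ^ 2 - b ^ 2 : ℝ) : ℂ) * x₁ - (τ : ℂ) * y₁)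
    (hμ₂ : μ₂ = ((a ^ 2 - b ^ 2 : ℝ) : ℂ) * x₂ - (τ : ℂ) * y₂)
    (hξ : ξ = 2 * (s : ℂ) * (w₁ * w₂))
    (hx2 : x2 = x₁ * x₂) :
    2 * (s : ℂ) * (μ₁ + μ₂) = ξ ^ 2 - 4 * (s : ℂ) ^ 2 * (x2 - (τ : ℂ)) - (σ : ℂ) ∧
    μ₁ * μ₂ = (τ : ℂ) * ξ ^ 2 + (σ : ℂ) * x2 - (τ : ℂ) * (σ : ℂ) :=
  stmt_10_general a b s τ σ hσ x₁ x₂ y₁ y₂ z₁ z₂ w₁ w₂ w₃ hw heq₁ heq₂ heq₃ heq₄ hgeom₁ hgeom₂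
    hgeom₃ μ₁ μ₂ ξ x2 hμ₁ hμ₂ hξ hx2
end

section
/- Let s ≠ 0, τ, p, r be real, and let x₁,x₂,y₁,y₂,z₁,z₂,w₁,w₂,w₃ be complex numbers with w₃ ≠ 0 satisfying (y₂ + 2s)w₁ + x₁w₂ + z₁w₃ = 0, x₂w₁ + (y₁ + 2s)w₂ + z₂w₃ = 0, 2s·w₁w₂ − (x₁x₂ + z₁z₂) + τ = 0, x₁x₂ + y₁y₂ + 2z₁z₂ = 2p², and w₁w₂ + w₃²/2 − (y₁ + y₂)/2 = (p² − τ)/(2s) + s. Then 2s·w₃·w₁ = x₁z₂ − (y₁ + 2s)z₁ and 2s·w₃·w₂ = x₂z₁ − (y₂ + 2s)z₂. -/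
/-!
The first two equations say that the matrix `M = [[y₂ + 2s, x₁], [x₂, y₁ + 2s]]` sends `(w₁, w₂)`
to `-w₃ (z₁, z₂)`. Eliminating `τ` and `p` from the three scalar equations shows
`det M = 2s·w₃²`, so Cramer's rule gives `2s·w₃²·(w₁, w₂) = w₃ · adj M (-z₁, -z₂)`, and one factor
`w₃ ≠ 0` cancels.
-/

theorem cramer_two {R : Type*} [CommRing R] {a b c d e f u v : R}
    (h₁ : a * u + b * v + c = 0) (h₂ : d * u + e * v + f = 0) :
    (a * e - b * d) * u = b * f - e * c ∧ (a * e - b * d) * v = d * c - a * f :=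
  ⟨by linear_combination e * h₁ - b * h₂, by linear_combination a * h₂ - d * h₁⟩

theorem det_eq_two_mul_mul_sq_of_energy {K : Type*} [Field K]
    {s τ p x₁ x₂ y₁ y₂ z₁ z₂ w₁ w₂ w₃ : K}
    (hs : 2 * s ≠ 0)
    (heq₄ : 2 * s * (w₁ * w₂) - (x₁ * x₂ + z₁ * z₂) + τ = 0)
    (hgeom₃ : x₁ * x₂ + y₁ * y₂ + 2 * z₁ * z₂ = 2 * p ^ 2)
    (henergy : w₁ * w₂ + w₃ ^ 2 / 2 - (y₁ + y₂) / 2 = (p ^ 2 - τ) / (2 * s) + s) :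
    (y₂ + 2 * s) * (y₁ + 2 * s) - x₁ * x₂ = 2 * s * w₃ ^ 2 := by
  have h2 : (2 : K) ≠ 0 := left_ne_zero_of_mul hs
  have hs₀ : s ≠ 0 := right_ne_zero_of_mul hs
  have henergy' : 2 * s * (w₁ * w₂) + s * w₃ ^ 2 - s * (y₁ + y₂) = p ^ 2 - τ + 2 * s ^ 2 := by
    field_simp at henergy
    linear_combination henergy
  linear_combination hgeom₃ + 2 * heq₄ - 2 * henergy'

theorem stmt_12_general
    (s τ p : ℝ) (hs : s ≠ 0)
    (x₁ x₂ y₁ y₂ z₁ z₂ w₁ w₂ w₃ : ℂ) (hw₃ : w₃ ≠ 0)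
    (heq₁ : (y₂ + 2 * (s : ℂ)) * w₁ + x₁ * w₂ + z₁ * w₃ = 0)
    (heq₂ : x₂ * w₁ + (y₁ + 2 * (s : ℂ)) * w₂ + z₂ * w₃ = 0)
    (heq₄ : 2 * (s : ℂ) * (w₁ * w₂) - (x₁ * x₂ + z₁ * z₂) + (τ : ℂ) = 0)
    (hgeom₃ : x₁ * x₂ + y₁ * y₂ + 2 * z₁ * z₂ = ((2 * p ^ 2 : ℝ) : ℂ))
    (henergy : w₁ * w₂ + w₃ ^ 2 / 2 - (y₁ + y₂) / 2 =
      (((p ^ 2 - τ) / (2 * s) + s : ℝ) : ℂ)) :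
    2 * (s : ℂ) * w₃ * w₁ = x₁ * z₂ - (y₁ + 2 * (s : ℂ)) * z₁ ∧
    2 * (s : ℂ) * w₃ * w₂ = x₂ * z₁ - (y₂ + 2 * (s : ℂ)) * z₂ := by
  have hs' : 2 * (s : ℂ) ≠ 0 := mul_ne_zero two_ne_zero (by exact_mod_cast hs)
  push_cast at hgeom₃ henergy
  have hdet := det_eq_two_mul_mul_sq_of_energy hs' heq₄ hgeom₃ henergy
  obtain ⟨hw₁, hw₂⟩ := cramer_two heq₁ heq₂
  rw [hdet] at hw₁ hw₂
  constructor
  · apply mul_right_cancel₀ hw₃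
    linear_combination hw₁
  · apply mul_right_cancel₀ hw₃
    linear_combination hw₂

/-- When `w₃ ≠ 0`, the equatorial components are recovered as
`2s·w₃·w₁ = x₁z₂ - (y₁ + 2s)z₁` and `2s·w₃·w₂ = x₂z₁ - (y₂ + 2s)z₂`. -/
theorem stmt_12
    (s τ p r : ℝ) (hs : s ≠ 0)
    (x₁ x₂ y₁ y₂ z₁ z₂ w₁ w₂ w₃ : ℂ) (hw₃ : w₃ ≠ 0)
    (heq₁ : (y₂ + 2 * (s : ℂ)) * w₁ + x₁ * w₂ + z₁ * w₃ = 0)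
    (heq₂ : x₂ * w₁ + (y₁ + 2 * (s : ℂ)) * w₂ + z₂ * w₃ = 0)
    (heq₄ : 2 * (s : ℂ) * (w₁ * w₂) - (x₁ * x₂ + z₁ * z₂) + (τ : ℂ) = 0)
    (hgeom₃ : x₁ * x₂ + y₁ * y₂ + 2 * z₁ * z₂ = ((2 * p ^ 2 : ℝ) : ℂ))
    (henergy : w₁ * w₂ + w₃ ^ 2 / 2 - (y₁ + y₂) / 2 =
      (((p ^ 2 - τ) / (2 * s) + s : ℝ) : ℂ)) :
    2 * (s : ℂ) * w₃ * w₁ = x₁ * z₂ - (y₁ + 2 * (s : ℂ)) * z₁ ∧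
    2 * (s : ℂ) * w₃ * w₂ = x₂ * z₁ - (y₂ + 2 * (s : ℂ)) * z₂ :=
  stmt_12_general s τ p hs x₁ x₂ y₁ y₂ z₁ z₂ w₁ w₂ w₃ hw₃ heq₁ heq₂ heq₄ hgeom₃ henergy
end

section
/- Let p, r, s, τ, σ, χ, x, ξ be real numbers with σ = τ² − 2p²τ + r⁴ and 4s²χ² = σ + 4s²τ. Define Φ₁ = (ξ + τ + r²)² − 2(p² + r²)x², Φ₂ = (ξ + τ − r²)² − 2(p² − r²)x², Ψ₁ = ξ² − 4s²(x + χ)², Ψ₂ = ξ² − 4s²(x − χ)², P = ξ⁴ + 2τξ³ + 2[(τ − 2s² − p²)x² − τ(2s² − p²) − r⁴]ξ² − 8s²[(τ − 2χ²)x² + τχ²]ξ − 4s²(x² − χ²)[2(τ − p²)x² − (τ² − r⁴)], and Q = (ξ + τ + 2s² − p²)² − 4s²x² + r⁴ − (2s² − p²)². Then P² − 4x²Q²(τξ² + σx² − τσ) = Φ₁Φ₂Ψ₁Ψ₂; equivalently, with P₁ = P + 2xQ√(τξ² + σx² − τσ) and P₂ = P − 2xQ√(τξ² + σx² − τσ)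 (when the radicand is nonnegative), P₁P₂ = Φ₁Φ₂Ψ₁Ψ₂ and P₁ + P₂ = 2P. -/
/-- The key identity `P² - 4x²Q²(τξ² + σx² - τσ) = Φ₁Φ₂Ψ₁Ψ₂`, with the equivalent
formulation `P₁P₂ = Φ₁Φ₂Ψ₁Ψ₂` and `P₁ + P₂ = 2P` for
`P₁,₂ = P ± 2xQ√(τξ² + σx² - τσ)` when the radicand is nonnegative. -/
theorem stmt_14
    (p r s τ σ χ x ξ : ℝ)
    (hσ : σ = τ ^ 2 - 2 * p ^ 2 * τ + r ^ 4)
    (hχ : 4 * s ^ 2 * χ ^ 2 = σ + 4 * s ^ 2 * τ)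
    (Φ₁ Φ₂ Ψ₁ Ψ₂ P Q : ℝ)
    (hΦ₁ : Φ₁ = (ξ + τ + r ^ 2) ^ 2 - 2 * (p ^ 2 + r ^ 2) * x ^ 2)
    (hΦ₂ : Φ₂ = (ξ + τ - r ^ 2) ^ 2 - 2 * (p ^ 2 - r ^ 2) * x ^ 2)
    (hΨ₁ : Ψ₁ = ξ ^ 2 - 4 * s ^ 2 * (x + χ) ^ 2)
    (hΨ₂ : Ψ₂ = ξ ^ 2 - 4 * s ^ 2 * (x - χ) ^ 2)
    (hP : P = ξ ^ 4 + 2 * τ * ξ ^ 3 +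
      2 * ((τ - 2 * s ^ 2 - p ^ 2) * x ^ 2 - τ * (2 * s ^ 2 - p ^ 2) - r ^ 4) * ξ ^ 2 -
      8 * s ^ 2 * ((τ - 2 * χ ^ 2) * x ^ 2 + τ * χ ^ 2) * ξ -
      4 * s ^ 2 * (x ^ 2 - χ ^ 2) * (2 * (τ - p ^ 2) * x ^ 2 - (τ ^ 2 - r ^ 4)))
    (hQ : Q = (ξ + τ + 2 * s ^ 2 - p ^ 2) ^ 2 - 4 * s ^ 2 * x ^ 2 + r ^ 4 -
      (2 * s ^ 2 - p ^ 2) ^ 2) :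
    P ^ 2 - 4 * x ^ 2 * Q ^ 2 * (τ * ξ ^ 2 + σ * x ^ 2 - τ * σ) = Φ₁ * Φ₂ * Ψ₁ * Ψ₂ ∧
    (0 ≤ τ * ξ ^ 2 + σ * x ^ 2 - τ * σ →
      ∀ P₁ P₂ : ℝ,
        P₁ = P + 2 * x * Q * Real.sqrt (τ * ξ ^ 2 + σ * x ^ 2 - τ * σ) →
        P₂ = P - 2 * x * Q * Real.sqrt (τ * ξ ^ 2 + σ * x ^ 2 - τ * σ) →
        P₁ * P₂ = Φ₁ * Φ₂ * Ψ₁ * Ψ₂ ∧ P₁ + P₂ = 2 * P) := by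
  have key : P ^ 2 - 4 * x ^ 2 * Q ^ 2 * (τ * ξ ^ 2 + σ * x ^ 2 - τ * σ) = Φ₁ * Φ₂ * Ψ₁ * Ψ₂ := by
    subst hσ hΦ₁ hΦ₂ hΨ₁ hΨ₂ hP hQ
    linear_combination ((2:ℝ)*ξ^6 + (8:ℝ)*x^2*ξ^5 + (4:ℝ)*τ*ξ^5 + (20:ℝ)*τ*x^2*ξ^4 + (16:ℝ)*τ*x^4*ξ^3 + τ^2*ξ^4 + (24:ℝ)*τ^2*x^4*ξ^2 + (-20:ℝ)*τ^3*x^2*ξ^2 + (16:ℝ)*τ^3*x^4*ξ + (-16:ℝ)*τ^4*x^2*ξ + (4:ℝ)*τ^4*x^4 + (-4:ℝ)*τ^5*x^2 + (-4:ℝ)*s^2*ξ^4*χ^2 + (8:ℝ)*s^2*x^2*ξ^4 + (64:ℝ)*s^2*x^4*ξ^2*χ^2 + (-32:ℝ)*s^2*x^4*ξ^3 + (-16:ℝ)*s^2*τ*ξ^3*χ^2 + (-4:ℝ)*s^2*τ*ξ^4 + (-64:ℝ)*s^2*τ*x^2*ξ^2*χ^2 + (16:ℝ)*s^2*τ*x^2*ξ^3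 + (64:ℝ)*s^2*τ*x^4*ξ*χ^2 + (-16:ℝ)*s^2*τ*x^4*ξ^2 + (-64:ℝ)*s^2*τ*x^6*ξ + (-8:ℝ)*s^2*τ^2*ξ^2*χ^2 + (-64:ℝ)*s^2*τ^2*x^2*ξ*χ^2 + (8:ℝ)*s^2*τ^2*x^2*ξ^2 + (16:ℝ)*s^2*τ^2*x^4*χ^2 + (96:ℝ)*s^2*τ^2*x^4*ξ + (-32:ℝ)*s^2*τ^2*x^6 + (-16:ℝ)*s^2*τ^3*x^2*χ^2 + (-32:ℝ)*s^2*τ^3*x^2*ξ + (48:ℝ)*s^2*τ^3*x^4 + (-16:ℝ)*s^2*τ^4*x^2 + (-3:ℝ)*r^4*ξ^4 + (8:ℝ)*r^4*x^4*ξ^2 + (-4:ℝ)*r^4*τ*x^2*ξ^2 + (16:ℝ)*r^4*τ*x^4*ξ + (-16:ℝ)*r^4*τ^2*x^2*ξ + (8:ℝ)*r^4*τ^2*x^4 + (-8:ℝ)*r^4*τ^3*x^2 + (8:ℝ)*r^4*s^2*ξ^2*χ^2 + (-24:ℝ)*r^4*s^2*x^2*ξ^2 + (16:ℝ)*r^4*s^2*x^4*χ^2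 + (32:ℝ)*r^4*s^2*x^4*ξ + (-32:ℝ)*r^4*s^2*x^6 + (-16:ℝ)*r^4*s^2*τ*x^2*χ^2 + (-32:ℝ)*r^4*s^2*τ*x^2*ξ + (48:ℝ)*r^4*s^2*τ*x^4 + (-16:ℝ)*r^4*s^2*τ^2*x^2 + (4:ℝ)*r^8*x^4 + (-4:ℝ)*r^8*τ*x^2 + (-12:ℝ)*p^2*x^2*ξ^4 + (-16:ℝ)*p^2*x^4*ξ^3 + (2:ℝ)*p^2*τ*ξ^4 + (-48:ℝ)*p^2*τ*x^4*ξ^2 + (40:ℝ)*p^2*τ^2*x^2*ξ^2 + (-48:ℝ)*p^2*τ^2*x^4*ξ + (48:ℝ)*p^2*τ^3*x^2*ξ + (-16:ℝ)*p^2*τ^3*x^4 + (16:ℝ)*p^2*τ^4*x^2 + (16:ℝ)*p^2*s^2*x^2*ξ^2*χ^2 + (-64:ℝ)*p^2*s^2*x^4*ξ*χ^2 + (-16:ℝ)*p^2*s^2*x^4*ξ^2 + (64:ℝ)*p^2*s^2*x^6*ξ + (64:ℝ)*p^2*s^2*τ*x^2*ξ*χ^2 + (32:ℝ)*p^2*s^2*τ*x^2*ξ^2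 + (-32:ℝ)*p^2*s^2*τ*x^4*χ^2 + (-128:ℝ)*p^2*s^2*τ*x^4*ξ + (64:ℝ)*p^2*s^2*τ*x^6 + (32:ℝ)*p^2*s^2*τ^2*x^2*χ^2 + (64:ℝ)*p^2*s^2*τ^2*x^2*ξ + (-96:ℝ)*p^2*s^2*τ^2*x^4 + (32:ℝ)*p^2*s^2*τ^3*x^2 + (-16:ℝ)*p^2*r^4*x^4*ξ + (16:ℝ)*p^2*r^4*τ*x^2*ξ + (-16:ℝ)*p^2*r^4*τ*x^4 + (16:ℝ)*p^2*r^4*τ^2*x^2 + (16:ℝ)*p^4*x^4*ξ^2 + (-16:ℝ)*p^4*τ*x^2*ξ^2 + (32:ℝ)*p^4*τ*x^4*ξ + (-32:ℝ)*p^4*τ^2*x^2*ξ + (16:ℝ)*p^4*τ^2*x^4 + (-16:ℝ)*p^4*τ^3*x^2) * hχ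
  refine ⟨key, fun hrad P₁ P₂ h₁ h₂ => ?_⟩
  have hs : Real.sqrt (τ * ξ ^ 2 + σ * x ^ 2 - τ * σ) ^ 2 = τ * ξ ^ 2 + σ * x ^ 2 - τ * σ :=
    Real.sq_sqrt hrad
  subst h₁ h₂
  exact ⟨by linear_combination key - 4 * x ^ 2 * Q ^ 2 * hs, by ring⟩
end

section
/- Let p, r be real parameters and for s ≠ 0, τ real define h(s,τ) = (p² − τ)/(2s) + s, k(s,τ) = (τ² − 2p²τ + r⁴)/(4s²) + τ, g(s,τ) = (p⁴ − r⁴)/(4s) + (p² − τ)s/2. Then the cross product of the partial derivative vectors satisfies ∂(h,k,g)/∂s × ∂(h,k,g)/∂τ = [s⁴ − (p² − τ)s² + (p⁴ − r⁴)/4] · ((τ − p²)/(2s⁴), 1/(2s³), 1/s⁴). In particular, this cross product vanishes exactly when s⁴ − (p² − τ)s² + (p⁴ − r⁴)/4 = 0. -/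
section BifurcationSheet

variable (p r τ : ℝ) {s : ℝ}

lemma hasDerivAt_sheet_h_s (hs : s ≠ 0) :
    HasDerivAt (fun u : ℝ => (p ^ 2 - τ) / (2 * u) + u) (1 - (p ^ 2 - τ) / (2 * s ^ 2)) s := by
  refine (((hasDerivAt_const s (p ^ 2 - τ)).div ((hasDerivAt_id s).const_mul 2)
    (by positivity)).add (hasDerivAt_id s)).congr_deriv ?_
  dsimp only [id]
  field_simp
  ring

lemma hasDerivAt_sheet_k_s (hs : s ≠ 0) :
    HasDerivAt (fun u : ℝ => (τ ^ 2 - 2 * p ^ 2 * τ + r ^ 4) / (4 * u ^ 2) + τ)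
      (-(τ ^ 2 - 2 * p ^ 2 * τ + r ^ 4) / (2 * s ^ 3)) s := by
  refine (((hasDerivAt_const s _).div ((hasDerivAt_pow 2 s).const_mul 4)
    (by positivity)).add (hasDerivAt_const s τ)).congr_deriv ?_
  field_simp
  ring

lemma hasDerivAt_sheet_g_s (hs : s ≠ 0) :
    HasDerivAt (fun u : ℝ => (p ^ 4 - r ^ 4) / (4 * u) + (p ^ 2 - τ) * u / 2)
      ((p ^ 2 - τ) / 2 - (p ^ 4 - r ^ 4) / (4 * s ^ 2)) s := by
  refine (((hasDerivAt_const s _).div ((hasDerivAt_id s).const_mul 4) (by positivity)).add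
    (((hasDerivAt_id s).const_mul (p ^ 2 - τ)).div_const 2)).congr_deriv ?_
  dsimp only [id]
  field_simp
  ring

lemma hasDerivAt_sheet_h_τ (s : ℝ) :
    HasDerivAt (fun v : ℝ => (p ^ 2 - v) / (2 * s) + s) (-1 / (2 * s)) τ := by
  refine ((((hasDerivAt_const τ (p ^ 2)).sub (hasDerivAt_id τ)).div_const (2 * s)).add
    (hasDerivAt_const τ s)).congr_deriv ?_
  ring

lemma hasDerivAt_sheet_k_τ (s : ℝ) :
    HasDerivAt (fun v : ℝ => (v ^ 2 - 2 * p ^ 2 * v + r ^ 4) / (4 * s ^ 2) + v)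
      ((τ - p ^ 2) / (2 * s ^ 2) + 1) τ := by
  refine (((((hasDerivAt_pow 2 τ).sub ((hasDerivAt_id τ).const_mul (2 * p ^ 2))).add
    (hasDerivAt_const τ (r ^ 4))).div_const (4 * s ^ 2)).add (hasDerivAt_id τ)).congr_deriv ?_
  ring

lemma hasDerivAt_sheet_g_τ (s : ℝ) :
    HasDerivAt (fun v : ℝ => (p ^ 4 - r ^ 4) / (4 * s) + (p ^ 2 - v) * s / 2) (-s / 2) τ := by
  refine ((hasDerivAt_const τ _).add ((((hasDerivAt_const τ (p ^ 2)).sub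
    (hasDerivAt_id τ)).mul_const s).div_const 2)).congr_deriv ?_
  ring

lemma crossProduct_sheet_partials (hs : s ≠ 0) :
    crossProduct
        ![1 - (p ^ 2 - τ) / (2 * s ^ 2), -(τ ^ 2 - 2 * p ^ 2 * τ + r ^ 4) / (2 * s ^ 3),
          (p ^ 2 - τ) / 2 - (p ^ 4 - r ^ 4) / (4 * s ^ 2)]
        ![-1 / (2 * s), (τ - p ^ 2) / (2 * s ^ 2) + 1, -s / 2] =
      (s ^ 4 - (p ^ 2 - τ) * s ^ 2 + (p ^ 4 - r ^ 4) / 4) •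
        ![(τ - p ^ 2) / (2 * s ^ 4), 1 / (2 * s ^ 3), 1 / s ^ 4] := by
  ext i
  fin_cases i <;>
    simp only [cross_apply, Fin.isValue, Fin.zero_eta, Fin.mk_one, Fin.reduceFinMk, Matrix.cons_val,
      Matrix.cons_val_zero, Matrix.cons_val_one, Pi.smul_apply, smul_eq_mul] <;>
    field_simp <;> ring

end BifurcationSheet

/-- The cross product of the partial-derivative vectors of the parametrization
`(h, k, g)(s, τ)` of the bifurcation sheet equals
`[s⁴ - (p² - τ)s² + (p⁴ - r⁴)/4] · ((τ - p²)/(2s⁴), 1/(2s³), 1/s⁴)`;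
in particular it vanishes exactly when `s⁴ - (p² - τ)s² + (p⁴ - r⁴)/4 = 0`. -/
theorem stmt_15
    (p r s τ : ℝ) (hs : s ≠ 0)
    (Ds Dτ : Fin 3 → ℝ)
    (hDs0 : HasDerivAt (fun u : ℝ => (p ^ 2 - τ) / (2 * u) + u) (Ds 0) s)
    (hDs1 : HasDerivAt (fun u : ℝ => (τ ^ 2 - 2 * p ^ 2 * τ + r ^ 4) / (4 * u ^ 2) + τ)
      (Ds 1) s)
    (hDs2 : HasDerivAt (fun u : ℝ => (p ^ 4 - r ^ 4) / (4 * u) + (p ^ 2 - τ) * u / 2)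
      (Ds 2) s)
    (hDτ0 : HasDerivAt (fun v : ℝ => (p ^ 2 - v) / (2 * s) + s) (Dτ 0) τ)
    (hDτ1 : HasDerivAt (fun v : ℝ => (v ^ 2 - 2 * p ^ 2 * v + r ^ 4) / (4 * s ^ 2) + v)
      (Dτ 1) τ)
    (hDτ2 : HasDerivAt (fun v : ℝ => (p ^ 4 - r ^ 4) / (4 * s) + (p ^ 2 - v) * s / 2)
      (Dτ 2) τ) :
    crossProduct Ds Dτ =
      (s ^ 4 - (p ^ 2 - τ) * s ^ 2 + (p ^ 4 - r ^ 4) / 4) •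
        ![(τ - p ^ 2) / (2 * s ^ 4), 1 / (2 * s ^ 3), 1 / s ^ 4] ∧
    (crossProduct Ds Dτ = 0 ↔
      s ^ 4 - (p ^ 2 - τ) * s ^ 2 + (p ^ 4 - r ^ 4) / 4 = 0) := by
  have hDs : Ds = ![1 - (p ^ 2 - τ) / (2 * s ^ 2), -(τ ^ 2 - 2 * p ^ 2 * τ + r ^ 4) / (2 * s ^ 3),
      (p ^ 2 - τ) / 2 - (p ^ 4 - r ^ 4) / (4 * s ^ 2)] := by
    ext i
    fin_cases i
    · exact hDs0.unique (hasDerivAt_sheet_h_s p τ hs)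
    · exact hDs1.unique (hasDerivAt_sheet_k_s p r τ hs)
    · exact hDs2.unique (hasDerivAt_sheet_g_s p r τ hs)
  have hDτ : Dτ = ![-1 / (2 * s), (τ - p ^ 2) / (2 * s ^ 2) + 1, -s / 2] := by
    ext i
    fin_cases i
    · exact hDτ0.unique (hasDerivAt_sheet_h_τ p τ s)
    · exact hDτ1.unique (hasDerivAt_sheet_k_τ p r τ s)
    · exact hDτ2.unique (hasDerivAt_sheet_g_τ p r τ s)
  have hnormal : ![(τ - p ^ 2) / (2 * s ^ 4), 1 / (2 * s ^ 3), 1 / s ^ 4] ≠ 0 := fun h => by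
    simpa [hs] using congrFun h 2
  rw [hDs, hDτ, crossProduct_sheet_partials p r τ hs]
  exact ⟨rfl, smul_eq_zero_iff_left hnormal⟩
end

section
/- Let p, r, τ, s, σ, χ, e, t be real numbers with σ = τ² − 2p²τ + r⁴, 4s²χ² = σ + 4s²τ, e ≥ 0, e² = σ, t ≥ 0, t² = τ. Define, for real u, v with u + v ≠ 0: ξ = e(uv + 1)/(u + v), x = t(u − v)/(u + v), μ = e·t·(uv − 1)/(u + v), and the polynomials φ₁(w) = e(1 + w²) + 2(τ + r²)w, φ₂(w) = e(1 + w²) + 2(τ − r²)w, ψ₁(w) = 2s[(χ + t)w² − (χ − t)], ψ₂(w) = 2s[(χ − t)w² − (χ + t)], θ₁(w) = e(1 − w²) + 4stw, θ₂(w) = e(1 − w²) − 4stw. Then: μ² = τξ² + σx² − τσ, and with Φ₁ = (ξ + τ + r²)² − 2(p² + r²)x², Φ₂ = (ξ + τ − r²)² − 2(p² − r²)x², Ψ₁ = ξ² − 4s²(x + χ)², Ψ₂ = ξ² − 4s²(x − χ)², Θ₁ = (ξ − 2sx)² − 4s²χ², Θ₂ = (ξ + 2sx)² − 4s²χ²,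 one has Φ₁ = φ₁(u)φ₁(v)/(u+v)², Φ₂ = φ₂(u)φ₂(v)/(u+v)², Ψ₁ = ψ₁(u)ψ₂(v)/(u+v)², Ψ₂ = ψ₂(u)ψ₁(v)/(u+v)², Θ₁ = θ₂(u)θ₁(v)/(u+v)², Θ₂ = θ₁(u)θ₂(v)/(u+v)². -/
/-!
With `ξ = e(uv+1)/(u+v)` and `x = t(u-v)/(u+v)`, clearing the denominator `(u+v)²` turns each of
`Φᵢ, Ψᵢ, Θᵢ` into a biquadratic form in `u, v`. It factors into one-variable polynomials exactly
because of a Pythagorean relation among its coefficients: `c t² = a² - e²` for the shifted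
quadric `(ξ + a)² - c x²`, and `k² = e² + m²` (with `k = 2sχ`, `m = 2st`) for `Ψᵢ` and `Θᵢ`; both
relations are the hypotheses on `σ` and `χ`. The second member of each pair `Ψ₂, Θ₂` is the first
one with `u` and `v` exchanged, which flips the sign of `x` and fixes `ξ`.
-/

section Factorizations

variable {K : Type*} [Field K] {e t u v : K}

theorem param_sq_eq_quadric (huv : u + v ≠ 0) :
    (e * t * (u * v - 1) / (u + v)) ^ 2 =
      t ^ 2 * (e * (u * v + 1) / (u + v)) ^ 2 + e ^ 2 * (t * (u - v) / (u + v)) ^ 2 -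
        t ^ 2 * e ^ 2 := by
  field_simp
  ring

theorem add_sq_sub_mul_sq_eq_div {a c : K} (h : c * t ^ 2 = a ^ 2 - e ^ 2) (huv : u + v ≠ 0) :
    (e * (u * v + 1) / (u + v) + a) ^ 2 - c * (t * (u - v) / (u + v)) ^ 2 =
      (e * (1 + u ^ 2) + 2 * a * u) * (e * (1 + v ^ 2) + 2 * a * v) / (u + v) ^ 2 := by
  field_simp
  linear_combination (-(u - v) ^ 2) * h

theorem sq_sub_add_sq_eq_div {k m : K} (h : k ^ 2 = e ^ 2 + m ^ 2) (huv : u + v ≠ 0) :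
    (e * (u * v + 1) / (u + v)) ^ 2 - (m * (u - v) / (u + v) + k) ^ 2 =
      ((k + m) * u ^ 2 - (k - m)) * ((k - m) * v ^ 2 - (k + m)) / (u + v) ^ 2 := by
  field_simp
  linear_combination (-(u * v + 1) ^ 2) * h

theorem sub_sq_sub_sq_eq_div {k m : K} (h : k ^ 2 = e ^ 2 + m ^ 2) (huv : u + v ≠ 0) :
    (e * (u * v + 1) / (u + v) - m * (u - v) / (u + v)) ^ 2 - k ^ 2 =
      (e * (1 - u ^ 2) - 2 * m * u) * (e * (1 - v ^ 2) + 2 * m * v) / (u + v) ^ 2 := by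
  field_simp
  linear_combination (-(u + v) ^ 2) * h

end Factorizations

theorem stmt_17_general
    (p r τ s σ χ e t : ℝ)
    (hσ : σ = τ ^ 2 - 2 * p ^ 2 * τ + r ^ 4)
    (hχ : 4 * s ^ 2 * χ ^ 2 = σ + 4 * s ^ 2 * τ)
    (he2 : e ^ 2 = σ) (ht2 : t ^ 2 = τ)
    (u v : ℝ) (huv : u + v ≠ 0)
    (ξ x μ : ℝ)
    (hξ : ξ = e * (u * v + 1) / (u + v))
    (hx : x = t * (u - v) / (u + v))
    (hμ : μ = e * t * (u * v - 1) / (u + v))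
    (φ₁ φ₂ ψ₁ ψ₂ θ₁ θ₂ : ℝ → ℝ)
    (hφ₁ : φ₁ = fun w => e * (1 + w ^ 2) + 2 * (τ + r ^ 2) * w)
    (hφ₂ : φ₂ = fun w => e * (1 + w ^ 2) + 2 * (τ - r ^ 2) * w)
    (hψ₁ : ψ₁ = fun w => 2 * s * ((χ + t) * w ^ 2 - (χ - t)))
    (hψ₂ : ψ₂ = fun w => 2 * s * ((χ - t) * w ^ 2 - (χ + t)))
    (hθ₁ : θ₁ = fun w => e * (1 - w ^ 2) + 4 * s * t * w)
    (hθ₂ : θ₂ = fun w => e * (1 - w ^ 2) - 4 * s * t * w)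
    (Φ₁ Φ₂ Ψ₁ Ψ₂ Θ₁ Θ₂ : ℝ)
    (hΦ₁ : Φ₁ = (ξ + τ + r ^ 2) ^ 2 - 2 * (p ^ 2 + r ^ 2) * x ^ 2)
    (hΦ₂ : Φ₂ = (ξ + τ - r ^ 2) ^ 2 - 2 * (p ^ 2 - r ^ 2) * x ^ 2)
    (hΨ₁ : Ψ₁ = ξ ^ 2 - 4 * s ^ 2 * (x + χ) ^ 2)
    (hΨ₂ : Ψ₂ = ξ ^ 2 - 4 * s ^ 2 * (x - χ) ^ 2)
    (hΘ₁ : Θ₁ = (ξ - 2 * s * x) ^ 2 - 4 * s ^ 2 * χ ^ 2)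
    (hΘ₂ : Θ₂ = (ξ + 2 * s * x) ^ 2 - 4 * s ^ 2 * χ ^ 2) :
    μ ^ 2 = τ * ξ ^ 2 + σ * x ^ 2 - τ * σ ∧
    Φ₁ = φ₁ u * φ₁ v / (u + v) ^ 2 ∧
    Φ₂ = φ₂ u * φ₂ v / (u + v) ^ 2 ∧
    Ψ₁ = ψ₁ u * ψ₂ v / (u + v) ^ 2 ∧
    Ψ₂ = ψ₂ u * ψ₁ v / (u + v) ^ 2 ∧
    Θ₁ = θ₂ u * θ₁ v / (u + v) ^ 2 ∧
    Θ₂ = θ₁ u * θ₂ v / (u + v) ^ 2 := by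
  subst hξ hx hμ hφ₁ hφ₂ hψ₁ hψ₂ hθ₁ hθ₂ hΦ₁ hΦ₂ hΨ₁ hΨ₂ hΘ₁ hΘ₂ he2 ht2
  have hvu : v + u ≠ 0 := by rwa [add_comm]
  have hk : (2 * s * χ) ^ 2 = e ^ 2 + (2 * s * t) ^ 2 := by linear_combination hχ
  have hΦ₁ : 2 * (p ^ 2 + r ^ 2) * t ^ 2 = (t ^ 2 + r ^ 2) ^ 2 - e ^ 2 := by
    linear_combination hσ
  have hΦ₂ : 2 * (p ^ 2 - r ^ 2) * t ^ 2 = (t ^ 2 - r ^ 2) ^ 2 - e ^ 2 := by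
    linear_combination hσ
  refine ⟨param_sq_eq_quadric huv, ?_, ?_, ?_, ?_, ?_, ?_⟩
  · linear_combination add_sq_sub_mul_sq_eq_div hΦ₁ huv
  · linear_combination add_sq_sub_mul_sq_eq_div hΦ₂ huv
  · linear_combination sq_sub_add_sq_eq_div hk huv
  · linear_combination sq_sub_add_sq_eq_div hk hvu
  · linear_combination sub_sq_sub_sq_eq_div hk huv
  · linear_combination sub_sq_sub_sq_eq_div hk hvu

/-- The substitution `ξ = √σ(uv+1)/(u+v)`, `x = √τ(u-v)/(u+v)`, `μ = √(τσ)(uv-1)/(u+v)`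
parametrizes the surface `μ² = τξ² + σx² - τσ` and splits the polynomials
`Φ₁, Φ₂, Ψ₁, Ψ₂, Θ₁, Θ₂` into products of the one-variable polynomials
`φ₁, φ₂, ψ₁, ψ₂, θ₁, θ₂`. -/
theorem stmt_17
    (p r τ s σ χ e t : ℝ)
    (hσ : σ = τ ^ 2 - 2 * p ^ 2 * τ + r ^ 4)
    (hχ : 4 * s ^ 2 * χ ^ 2 = σ + 4 * s ^ 2 * τ)
    (he : 0 ≤ e) (he2 : e ^ 2 = σ) (ht : 0 ≤ t) (ht2 : t ^ 2 = τ)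
    (u v : ℝ) (huv : u + v ≠ 0)
    (ξ x μ : ℝ)
    (hξ : ξ = e * (u * v + 1) / (u + v))
    (hx : x = t * (u - v) / (u + v))
    (hμ : μ = e * t * (u * v - 1) / (u + v))
    (φ₁ φ₂ ψ₁ ψ₂ θ₁ θ₂ : ℝ → ℝ)
    (hφ₁ : φ₁ = fun w => e * (1 + w ^ 2) + 2 * (τ + r ^ 2) * w)
    (hφ₂ : φ₂ = fun w => e * (1 + w ^ 2) + 2 * (τ - r ^ 2) * w)
    (hψ₁ : ψ₁ = fun w => 2 * s * ((χ + t) * w ^ 2 - (χ - t)))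
    (hψ₂ : ψ₂ = fun w => 2 * s * ((χ - t) * w ^ 2 - (χ + t)))
    (hθ₁ : θ₁ = fun w => e * (1 - w ^ 2) + 4 * s * t * w)
    (hθ₂ : θ₂ = fun w => e * (1 - w ^ 2) - 4 * s * t * w)
    (Φ₁ Φ₂ Ψ₁ Ψ₂ Θ₁ Θ₂ : ℝ)
    (hΦ₁ : Φ₁ = (ξ + τ + r ^ 2) ^ 2 - 2 * (p ^ 2 + r ^ 2) * x ^ 2)
    (hΦ₂ : Φ₂ = (ξ + τ - r ^ 2) ^ 2 - 2 * (p ^ 2 - r ^ 2) * x ^ 2)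
    (hΨ₁ : Ψ₁ = ξ ^ 2 - 4 * s ^ 2 * (x + χ) ^ 2)
    (hΨ₂ : Ψ₂ = ξ ^ 2 - 4 * s ^ 2 * (x - χ) ^ 2)
    (hΘ₁ : Θ₁ = (ξ - 2 * s * x) ^ 2 - 4 * s ^ 2 * χ ^ 2)
    (hΘ₂ : Θ₂ = (ξ + 2 * s * x) ^ 2 - 4 * s ^ 2 * χ ^ 2) :
    μ ^ 2 = τ * ξ ^ 2 + σ * x ^ 2 - τ * σ ∧
    Φ₁ = φ₁ u * φ₁ v / (u + v) ^ 2 ∧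
    Φ₂ = φ₂ u * φ₂ v / (u + v) ^ 2 ∧
    Ψ₁ = ψ₁ u * ψ₂ v / (u + v) ^ 2 ∧
    Ψ₂ = ψ₂ u * ψ₁ v / (u + v) ^ 2 ∧
    Θ₁ = θ₂ u * θ₁ v / (u + v) ^ 2 ∧
    Θ₂ = θ₁ u * θ₂ v / (u + v) ^ 2 :=
  stmt_17_general p r τ s σ χ e t hσ hχ he2 ht2 u v huv ξ x μ hξ hx hμ φ₁ φ₂ ψ₁ ψ₂ θ₁ θ₂ hφ₁ hφ₂ hψ₁
    hψ₂ hθ₁ hθ₂ Φ₁ Φ₂ Ψ₁ Ψ₂ Θ₁ Θ₂ hΦ₁ hΦ₂ hΨ₁ hΨ₂ hΘ₁ hΘ₂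
end

section
/- Let a > b > 0, p² = a²+b², r² = a²−b², and let s, τ, σ, χ, e be real numbers with s ≠ 0, σ = τ² − 2p²τ + r⁴, 4s²χ² = σ + 4s²τ, χ ≥ 0, e² = σ. Consider the degree-6 polynomial Q(w) = (w² − 1)(σw² − 4s²χ²)[(e·w + τ)² − r⁴]. If there exists a complex number w₀ with Q(w₀) = 0 and Q'(w₀) = 0 (i.e., Q has a multiple root), then s·τ·σ·χ·(a² − s²)·(b² − s²) = 0. -/
/-!
Write `Q = A·B·C` with `A = w² - 1`, `B = σw² - 4s²χ²`, `C = (ew + τ)² - r⁴`. A multiple root of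
`Q` is either a multiple root of one factor or a common root of two. `A` has simple roots; a
multiple root of `B` forces `σ = 0` or `sχ = 0`, one of `C` forces `r = 0`; a common root of `A`
and `B` forces `s²τ = 0`. At a common root of `C` with `A` or with `B`, `u = ew` satisfies
`u² = σ + cτ` with `c = 0` resp. `c = 4s²`, and `(u + τ)² = r⁴`; eliminating `u` gives
`τ (c - 4a²)(c - 4b²) = 0`, which is `ab = 0` resp. `(a² - s²)(b² - s²) = 0`.
-/

section
variable {R : Type*} [CommRing R] [NoZeroDivisors R]

theorem factor_cases_of_mul_mul_eq_zero {f g h f' g' h' : R} (hroot : f * g * h = 0)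
    (hderiv : (f' * g + f * g') * h + f * g * h' = 0) :
    (f = 0 ∧ f' = 0) ∨ (g = 0 ∧ g' = 0) ∨ (h = 0 ∧ h' = 0) ∨
      (f = 0 ∧ g = 0) ∨ (f = 0 ∧ h = 0) ∨ (g = 0 ∧ h = 0) := by
  rcases mul_eq_zero.mp hroot with hfg | hh
  · rcases mul_eq_zero.mp hfg with hf | hg
    · subst hf
      simp only [zero_mul, add_zero, mul_eq_zero] at hderiv
      tauto
    · subst hg
      simp only [zero_mul, mul_zero, add_zero, zero_add, mul_eq_zero] at hderiv
      tauto
  · subst hh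
    simp only [mul_zero, zero_add, mul_eq_zero] at hderiv
    tauto

theorem eq_four_mul_sq_or_of_add_sq_eq {a b τ σ u c : R}
    (hσ : σ = τ ^ 2 - 2 * (a ^ 2 + b ^ 2) * τ + (a ^ 2 - b ^ 2) ^ 2)
    (hu : u ^ 2 = σ + c * τ) (hτ : τ ≠ 0) (hroot : (u + τ) ^ 2 = (a ^ 2 - b ^ 2) ^ 2) :
    c = 4 * a ^ 2 ∨ c = 4 * b ^ 2 := by
  have hlin : τ * (2 * u - (2 * (a ^ 2 + b ^ 2) - c - 2 * τ)) = 0 := by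
    linear_combination hroot - hu - hσ
  have hu' : 2 * u = 2 * (a ^ 2 + b ^ 2) - c - 2 * τ :=
    sub_eq_zero.mp ((mul_eq_zero.mp hlin).resolve_left hτ)
  have hprod : (c - 4 * a ^ 2) * (c - 4 * b ^ 2) = 0 := by
    linear_combination -(2 * u + 2 * (a ^ 2 + b ^ 2) - c - 2 * τ) * hu' + 4 * hu + 4 * hσ
  simpa only [mul_eq_zero, sub_eq_zero] using hprod

end

theorem mul_eq_zero_of_multiple_root {K : Type*} [Field K] [CharZero K]
    {a b s τ σ χ e w : K} (ha : a ≠ 0) (hb : b ≠ 0) (hab : a ^ 2 ≠ b ^ 2)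
    (hσ : σ = τ ^ 2 - 2 * (a ^ 2 + b ^ 2) * τ + (a ^ 2 - b ^ 2) ^ 2)
    (hχ : 4 * s ^ 2 * χ ^ 2 = σ + 4 * s ^ 2 * τ) (he : e ^ 2 = σ)
    (hroot : (w ^ 2 - 1) * (σ * w ^ 2 - 4 * s ^ 2 * χ ^ 2) *
      ((e * w + τ) ^ 2 - (a ^ 2 - b ^ 2) ^ 2) = 0)
    (hderiv : (2 * w * (σ * w ^ 2 - 4 * s ^ 2 * χ ^ 2) + (w ^ 2 - 1) * (σ * (2 * w))) *
        ((e * w + τ) ^ 2 - (a ^ 2 - b ^ 2) ^ 2) +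
      (w ^ 2 - 1) * (σ * w ^ 2 - 4 * s ^ 2 * χ ^ 2) * (2 * (e * w + τ) * e) = 0) :
    s * τ * σ * χ * (a ^ 2 - s ^ 2) * (b ^ 2 - s ^ 2) = 0 := by
  by_contra hne
  simp only [mul_eq_zero, not_or] at hne
  obtain ⟨⟨⟨⟨⟨hs, hτ⟩, hσ0⟩, hχ0⟩, has⟩, hbs⟩ := hne
  have h2 : (2 : K) ≠ 0 := two_ne_zero
  have he0 : e ≠ 0 := by rintro rfl; exact hσ0 (by rw [← he]; ring)
  rcases factor_cases_of_mul_mul_eq_zero hroot hderiv with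
    ⟨hA, hA'⟩ | ⟨hB, hB'⟩ | ⟨hC, hC'⟩ | ⟨hA, hB⟩ | ⟨hA, hC⟩ | ⟨hB, hC⟩
  · have hw : w = 0 := by simpa [h2] using hA'
    exact one_ne_zero (by linear_combination -hA + w * hw : (1 : K) = 0)
  · have hw : w = 0 := by simpa [h2, hσ0] using hB'
    have hsχ : s ^ 2 * χ ^ 2 = 0 := by linear_combination (σ * w * hw - hB) / 4
    exact mul_ne_zero (pow_ne_zero 2 hs) (pow_ne_zero 2 hχ0) hsχ
  · have hu : e * w + τ = 0 := by simpa [h2, he0] using hC'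
    have hr : (a ^ 2 - b ^ 2) ^ 2 = 0 := by linear_combination (e * w + τ) * hu - hC
    exact hab (sub_eq_zero.mp (pow_eq_zero_iff two_ne_zero |>.mp hr))
  · have hsτ : s ^ 2 * τ = 0 := by linear_combination (σ * hA - hB - hχ) / 4
    exact mul_ne_zero (pow_ne_zero 2 hs) hτ hsτ
  · have hu : (e * w) ^ 2 = σ + 0 * τ := by linear_combination he + e ^ 2 * hA
    rcases eq_four_mul_sq_or_of_add_sq_eq hσ hu hτ (sub_eq_zero.mp hC) with h | h
    · exact ha (pow_eq_zero_iff two_ne_zero |>.mp (by linear_combination -h / 4))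
    · exact hb (pow_eq_zero_iff two_ne_zero |>.mp (by linear_combination -h / 4))
  · have hu : (e * w) ^ 2 = σ + 4 * s ^ 2 * τ := by linear_combination w ^ 2 * he + hB + hχ
    rcases eq_four_mul_sq_or_of_add_sq_eq hσ hu hτ (sub_eq_zero.mp hC) with h | h
    · exact has (by linear_combination -h / 4)
    · exact hbs (by linear_combination -h / 4)

theorem stmt_18_general
    (a b s τ σ χ e : ℝ) (hab : b < a) (hb : 0 < b)
    (hσ : σ = τ ^ 2 - 2 * (a ^ 2 + b ^ 2) * τ + (a ^ 2 - b ^ 2) ^ 2)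
    (hχ : 4 * s ^ 2 * χ ^ 2 = σ + 4 * s ^ 2 * τ)
    (he : e ^ 2 = σ)
    (Q : ℂ → ℂ)
    (hQ : Q = fun w => (w ^ 2 - 1) * ((σ : ℂ) * w ^ 2 - 4 * (s : ℂ) ^ 2 * (χ : ℂ) ^ 2) *
      (((e : ℂ) * w + (τ : ℂ)) ^ 2 - ((a ^ 2 - b ^ 2 : ℝ) : ℂ) ^ 2))
    (hmult : ∃ w₀ : ℂ, Q w₀ = 0 ∧ deriv Q w₀ = 0) :
    s * τ * σ * χ * (a ^ 2 - s ^ 2) * (b ^ 2 - s ^ 2) = 0 := by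
  obtain ⟨w, hQw, hQ'w⟩ := hmult
  subst hQ
  have hA : HasDerivAt (fun w : ℂ => w ^ 2 - 1) (2 * w) w := by
    simpa using (hasDerivAt_pow 2 w).sub_const 1
  have hB : HasDerivAt (fun w : ℂ => (σ : ℂ) * w ^ 2 - 4 * (s : ℂ) ^ 2 * (χ : ℂ) ^ 2)
      (σ * (2 * w)) w := by
    simpa using ((hasDerivAt_pow 2 w).const_mul (σ : ℂ)).sub_const (4 * (s : ℂ) ^ 2 * (χ : ℂ) ^ 2)
  have hC : HasDerivAt (fun w : ℂ => ((e : ℂ) * w + τ) ^ 2 - ((a ^ 2 - b ^ 2 : ℝ) : ℂ) ^ 2)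
      (2 * (e * w + τ) * e) w := by
    simpa using ((((hasDerivAt_id w).const_mul (e : ℂ)).add_const (τ : ℂ)).pow 2).sub_const (((a ^ 2 - b ^ 2 : ℝ) : ℂ) ^ 2)
  have hQd : HasDerivAt (fun w : ℂ => (w ^ 2 - 1) * ((σ : ℂ) * w ^ 2 - 4 * (s : ℂ) ^ 2 * (χ : ℂ) ^ 2) *
      (((e : ℂ) * w + (τ : ℂ)) ^ 2 - ((a ^ 2 - b ^ 2 : ℝ) : ℂ) ^ 2)) _ w := (hA.mul hB).mul hC
  rw [hQd.deriv] at hQ'w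
  have ha : 0 < a := hb.trans hab
  have hab2 : (a : ℂ) ^ 2 ≠ (b : ℂ) ^ 2 := by
    exact_mod_cast (pow_lt_pow_left₀ hab hb.le two_ne_zero).ne'
  push_cast at hQw hQ'w
  exact_mod_cast mul_eq_zero_of_multiple_root (by exact_mod_cast ha.ne') (by exact_mod_cast hb.ne')
    hab2 (by exact_mod_cast hσ) (by exact_mod_cast hχ) (by exact_mod_cast he) hQw hQ'w

/-- If the degree-6 polynomial `Q(w) = (w² - 1)(σw² - 4s²χ²)[(e·w + τ)² - r⁴]` has a
multiple root in `ℂ`, then `s·τ·σ·χ·(a² - s²)(b² - s²) = 0`. -/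
theorem stmt_18
    (a b s τ σ χ e : ℝ) (hab : b < a) (hb : 0 < b) (hs : s ≠ 0)
    (hσ : σ = τ ^ 2 - 2 * (a ^ 2 + b ^ 2) * τ + (a ^ 2 - b ^ 2) ^ 2)
    (hχ : 4 * s ^ 2 * χ ^ 2 = σ + 4 * s ^ 2 * τ) (hχ0 : 0 ≤ χ)
    (he : e ^ 2 = σ)
    (Q : ℂ → ℂ)
    (hQ : Q = fun w => (w ^ 2 - 1) * ((σ : ℂ) * w ^ 2 - 4 * (s : ℂ) ^ 2 * (χ : ℂ) ^ 2) *
      (((e : ℂ) * w + (τ : ℂ)) ^ 2 - ((a ^ 2 - b ^ 2 : ℝ) : ℂ) ^ 2))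
    (hmult : ∃ w₀ : ℂ, Q w₀ = 0 ∧ deriv Q w₀ = 0) :
    s * τ * σ * χ * (a ^ 2 - s ^ 2) * (b ^ 2 - s ^ 2) = 0 :=
  stmt_18_general a b s τ σ χ e hab hb hσ hχ he Q hQ hmult
end
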